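/- arXiv:2509.26280 — 7 statements merged into one kernel-verified Lean document; each statement's English description precedes it below -/
import Mathlib

section
/- Let X be a random variable with continuous distribution function F_X whose support has infimum t_0 and supremum t_K, and let T be a pcsm function with change points (t_k)_{k=0}^K, K ∈ ℕ ∪ {∞}. Then the W-transform 𝒲 of F_X and T is uniformity-preserving: if U ∼ U(0,1), then 𝒲(U) ∼ U(0,1). -/
/-!
Let `μ` be the law of `X` and `ν` that of `T(X)`. For `U ∼ U(0,1)` the quantile transform gives
`F_X⁻¹(U) ∼ μ`, so `𝒲(U) = F_{T(X)}(T(F_X⁻¹(U)))` has the law of `F_{T(X)}(T(X))`. Since `F_X` is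
continuous, `μ` has no atoms and is carried by the support, hence by the union of the open pieces;
`T` is measurable on that union and injective on each of the countably many pieces, so `ν` has no
atoms either. Thus `F_{T(X)}` is continuous and the probability integral transform makes
`F_{T(X)}(T(X))` uniform.
-/

open MeasureTheory Set

/-- The distribution function of a measure on `ℝ`. -/
noncomputable def distFun (μ : Measure ℝ) : ℝ → ℝ := fun x => (μ (Set.Iic x)).toReal

/-- The (generalised) quantile function of a distribution function. -/
noncomputable def quantileFun (F : ℝ → ℝ) : ℝ → ℝ := fun u => sInf {x : ℝ | u ≤ F x}

/-- The support of a distribution function `F`: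
`{x : F(x) - F(x-h) > 0 for all h > 0}`. -/
def suppSet (F : ℝ → ℝ) : Set ℝ := {x : ℝ | ∀ h > 0, 0 < F x - F (x - h)}

/-- The `k`-th open piece `(t_{k-1}, t_k)` determined by (extended-real) change points. -/
def pieceO (t : ℕ → EReal) (k : ℕ) : Set ℝ :=
  {x : ℝ | t (k - 1) < (x : EReal) ∧ (x : EReal) < t k}

/-- The uniform distribution on `(0,1]`, i.e. the `U(0,1)` law. -/
noncomputable def unif01 : Measure ℝ := volume.restrict (Set.Ioc (0 : ℝ) 1)

open Filter Topology ProbabilityTheory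

lemma distFun_eq_cdf (μ : Measure ℝ) [IsProbabilityMeasure μ] : distFun μ = cdf μ :=
  funext fun x => by rw [cdf_eq_real, measureReal_def]; rfl

instance isProbabilityMeasure_unif01 : IsProbabilityMeasure unif01 :=
  ⟨by rw [unif01, Measure.restrict_apply_univ, Real.volume_Ioc]; norm_num⟩

lemma unif01_eq_restrict_Ioo : unif01 = volume.restrict (Ioo 0 1) :=
  (Measure.restrict_congr_set Ioo_ae_eq_Ioc).symm

lemma ae_unif01_mem_Ioo : ∀ᵐ u ∂unif01, u ∈ Ioo (0 : ℝ) 1 := by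
  rw [unif01_eq_restrict_Ioo]
  exact ae_restrict_mem measurableSet_Ioo

lemma unif01_Iic {a : ℝ} (ha : a ≤ 1) : unif01 (Iic a) = ENNReal.ofReal a := by
  rw [unif01, Measure.restrict_apply measurableSet_Iic, Iic_inter_Ioc_of_le ha, Real.volume_Ioc,
    sub_zero]

/-- Off the support a monotone `F` is locally constant from the left, so it takes there only
values it takes at rational points. -/
lemma compl_suppSet_subset {F : ℝ → ℝ} (hF : Monotone F) :
    (suppSet F)ᶜ ⊆ F ⁻¹' (F '' range ((↑) : ℚ → ℝ)) := by
  intro x hx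
  simp only [suppSet, mem_compl_iff, mem_ofPred_eq, not_forall, not_lt] at hx
  obtain ⟨h, hh, hle⟩ := hx
  obtain ⟨q, hq₁, hq₂⟩ := exists_rat_btwn (sub_lt_self x hh)
  exact ⟨q, mem_range_self q,
    le_antisymm (hF hq₂.le) ((sub_nonpos.1 hle).trans (hF hq₁.le))⟩

section Cdf

variable (μ : Measure ℝ)

/-- Right-continuity of `cdf μ` makes `{y | u ≤ cdf μ y}` contain its infimum. -/
lemma quantileFun_cdf_le_iff {u : ℝ} (hu : u ∈ Ioo (0 : ℝ) 1) (x : ℝ) :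
    quantileFun (cdf μ) u ≤ x ↔ u ≤ cdf μ x := by
  set S := {y : ℝ | u ≤ cdf μ y}
  have hbdd : BddBelow S := by
    obtain ⟨y₀, hy₀⟩ := ((tendsto_cdf_atBot μ).eventually (eventually_lt_nhds hu.1)).exists
    exact ⟨y₀, fun y hy => ((monotone_cdf μ).reflect_lt (hy₀.trans_le hy)).le⟩
  have hne : S.Nonempty :=
    ((tendsto_cdf_atTop μ).eventually (eventually_gt_nhds hu.2)).exists.imp fun _ h => h.le
  have hmem : sInf S ∈ S := by
    refine ge_of_tendsto (((cdf μ).right_continuous _).mono Ioi_subset_Ici_self)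
      (eventually_nhdsWithin_of_forall fun y hy => ?_)
    obtain ⟨s, hs, hsy⟩ := exists_lt_of_csInf_lt hne hy
    exact hs.trans (monotone_cdf μ hsy.le)
  exact ⟨fun h => hmem.trans (monotone_cdf μ h), fun h => csInf_le hbdd h⟩

lemma monotoneOn_quantileFun_cdf : MonotoneOn (quantileFun (cdf μ)) (Ioo 0 1) :=
  fun _ hu _ hv huv =>
    (quantileFun_cdf_le_iff μ hu _).2 (huv.trans ((quantileFun_cdf_le_iff μ hv _).1 le_rfl))

lemma aemeasurable_quantileFun_cdf : AEMeasurable (quantileFun (cdf μ)) unif01 := by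
  rw [unif01_eq_restrict_Ioo]
  exact aemeasurable_restrict_of_monotoneOn measurableSet_Ioo (monotoneOn_quantileFun_cdf μ)

theorem map_quantileFun_cdf [IsProbabilityMeasure μ] : unif01.map (quantileFun (cdf μ)) = μ := by
  refine Measure.ext_of_Iic _ _ fun x => ?_
  rw [Measure.map_apply_of_aemeasurable (aemeasurable_quantileFun_cdf μ) measurableSet_Iic,
    ← ofReal_cdf, ← unif01_Iic (cdf_le_one μ x)]
  refine measure_congr ?_
  filter_upwards [ae_unif01_mem_Ioo] with u hu
  exact propext (quantileFun_cdf_le_iff μ hu x)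

lemma map_comp_quantileFun_cdf [IsProbabilityMeasure μ] {β : Type*} [MeasurableSpace β]
    {g : ℝ → β} (hg : AEMeasurable g μ) : unif01.map (g ∘ quantileFun (cdf μ)) = μ.map g := by
  rw [← AEMeasurable.map_map_of_aemeasurable ((map_quantileFun_cdf μ).symm ▸ hg)
    (aemeasurable_quantileFun_cdf μ), map_quantileFun_cdf]

lemma cdf_quantileFun_cdf (hc : Continuous (cdf μ)) {u : ℝ} (hu : u ∈ Ioo (0 : ℝ) 1) :
    cdf μ (quantileFun (cdf μ) u) = u := by
  refine le_antisymm ?_ ((quantileFun_cdf_le_iff μ hu _).1 le_rfl)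
  refine le_of_tendsto ((hc.tendsto _).mono_left nhdsWithin_le_nhds)
    (eventually_nhdsWithin_of_forall (s := Iio (quantileFun (cdf μ) u)) fun y hy => ?_)
  exact (not_le.1 fun h => hy.not_ge ((quantileFun_cdf_le_iff μ hu y).2 h)).le

theorem map_cdf_of_continuous [IsProbabilityMeasure μ] (hc : Continuous (cdf μ)) :
    μ.map (cdf μ) = unif01 := by
  rw [← map_comp_quantileFun_cdf μ (monotone_cdf μ).measurable.aemeasurable]
  conv_rhs => rw [← Measure.map_id (μ := unif01)]
  refine Measure.map_congr ?_
  filter_upwards [ae_unif01_mem_Ioo] with u hu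
  exact cdf_quantileFun_cdf μ hc hu

lemma measure_singleton_eq_zero_iff_continuousAt_cdf [IsProbabilityMeasure μ] (x : ℝ) :
    μ {x} = 0 ↔ ContinuousAt (cdf μ) x := by
  have hx := StieltjesFunction.measure_singleton (cdf μ) x
  rw [measure_cdf] at hx
  rw [hx, (monotone_cdf μ).continuousAt_iff_leftLim_eq_rightLim, (cdf μ).rightLim_eq,
    ENNReal.ofReal_eq_zero, sub_nonpos]
  exact ⟨fun h => le_antisymm ((monotone_cdf μ).leftLim_le le_rfl) h, fun h => h.ge⟩

theorem continuous_cdf_iff [IsProbabilityMeasure μ] :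
    Continuous (cdf μ) ↔ NullSingletonClass μ := by
  simp only [continuous_iff_continuousAt, ← measure_singleton_eq_zero_iff_continuousAt_cdf]
  exact ⟨fun h => ⟨h⟩, fun ⟨h⟩ => h⟩

/-- By the probability integral transform, `cdf μ` pushes `μ` to the atomless `unif01`, which
ignores the countably many values taken off the support. -/
lemma measure_compl_suppSet_cdf [IsProbabilityMeasure μ] (hc : Continuous (cdf μ)) :
    μ (suppSet (cdf μ))ᶜ = 0 := by
  have hcount : (cdf μ '' range ((↑) : ℚ → ℝ)).Countable := (countable_range _).image _
  refine measure_mono_null (compl_suppSet_subset (monotone_cdf μ)) ?_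
  rw [← Measure.map_apply (monotone_cdf μ).measurable hcount.measurableSet,
    map_cdf_of_continuous μ hc]
  exact hcount.measure_zero (volume.restrict (Ioc 0 1))

lemma ae_coe_ne [NullSingletonClass μ] (s : EReal) : ∀ᵐ x : ℝ ∂μ, (x : EReal) ≠ s := by
  have hs : {x : ℝ | (x : EReal) = s}.Subsingleton := fun _ ha _ hb =>
    EReal.coe_injective (ha.trans hb.symm)
  exact hs.countable.ae_notMem μ

lemma ae_sInf_suppSet_lt_lt_sSup [IsProbabilityMeasure μ] (hc : Continuous (cdf μ)) :
    ∀ᵐ x : ℝ ∂μ, sInf (((↑) : ℝ → EReal) '' suppSet (cdf μ)) < x ∧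
      (x : EReal) < sSup (((↑) : ℝ → EReal) '' suppSet (cdf μ)) := by
  have := (continuous_cdf_iff μ).1 hc
  filter_upwards [measure_compl_suppSet_cdf μ hc, ae_coe_ne μ (sInf _), ae_coe_ne μ (sSup _)]
    with x hx h₀ h₁
  exact ⟨(sInf_le (mem_image_of_mem _ hx)).lt_of_ne' h₀,
    (le_sSup (mem_image_of_mem _ hx)).lt_of_ne h₁⟩

end Cdf

lemma isOpen_pieceO (t : ℕ → EReal) (k : ℕ) : IsOpen (pieceO t k) :=
  isOpen_Ioo.preimage continuous_coe_real_ereal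

/-- The piece containing `x` is the one ending at the first change point above `x`. -/
lemma exists_mem_pieceO {t : ℕ → EReal} {K : ℕ∞} {x : ℝ} (h₀ : t 0 < x)
    (hK : (x : EReal) < ⨆ k : {k : ℕ // (k : ℕ∞) ≤ K}, t k.1) (hne : ∀ k, (x : EReal) ≠ t k) :
    ∃ k : ℕ, 1 ≤ k ∧ (k : ℕ∞) ≤ K ∧ x ∈ pieceO t k := by
  classical
  obtain ⟨⟨k₁, hk₁⟩, hxk₁⟩ := lt_iSup_iff.1 hK
  have hex : ∃ k, (x : EReal) < t k := ⟨k₁, hxk₁⟩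
  have hpos : 0 < Nat.find hex := (Nat.find_pos hex).2 h₀.not_gt
  refine ⟨Nat.find hex, hpos, (Nat.cast_le.2 (Nat.find_min' hex hxk₁)).trans hk₁, ?_,
    Nat.find_spec hex⟩
  exact (not_lt.1 (Nat.find_min hex (Nat.sub_lt hpos one_pos))).lt_of_ne (hne _).symm

lemma ae_mem_iUnion_pieceO (μ : Measure ℝ) [IsProbabilityMeasure μ] (hc : Continuous (cdf μ))
    {K : ℕ∞} {t : ℕ → EReal}
    (hsupp0 : sInf (((↑) : ℝ → EReal) '' suppSet (cdf μ)) = t 0)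
    (hsuppK : sSup (((↑) : ℝ → EReal) '' suppSet (cdf μ)) =
      ⨆ k : {k : ℕ // (k : ℕ∞) ≤ K}, t k.1) :
    ∀ᵐ x ∂μ, x ∈ ⋃ k : {k : ℕ // 1 ≤ k ∧ (k : ℕ∞) ≤ K}, pieceO t k := by
  have := (continuous_cdf_iff μ).1 hc
  filter_upwards [ae_sInf_suppSet_lt_lt_sSup μ hc, ae_all_iff.2 fun k => ae_coe_ne μ (t k)]
    with x hx hne
  rw [hsupp0, hsuppK] at hx
  obtain ⟨k, hk₁, hkK, hxk⟩ := exists_mem_pieceO hx.1 hx.2 hne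
  exact mem_iUnion.2 ⟨⟨k, hk₁, hkK⟩, hxk⟩

section Pieces

variable {α β ι : Type*} [MeasurableSpace α] [MeasurableSpace β] [Countable ι]
  {μ : Measure α} {f : α → β} {s : ι → Set α}

theorem aemeasurable_of_continuousOn_iUnion [TopologicalSpace α] [OpensMeasurableSpace α]
    [TopologicalSpace β] [BorelSpace β] (hs : ∀ i, MeasurableSet (s i))
    (hf : ∀ i, ContinuousOn f (s i)) (hμ : ∀ᵐ x ∂μ, x ∈ ⋃ i, s i) : AEMeasurable f μ := by
  rw [← Measure.restrict_eq_self_of_ae_mem hμ]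
  exact aemeasurable_iUnion_iff.2 fun i => (hf i).aemeasurable (hs i)

theorem nullSingletonClass_map_of_injOn [MeasurableSingletonClass β] [NullSingletonClass μ]
    (hf : AEMeasurable f μ) (hinj : ∀ i, InjOn f (s i)) (hμ : ∀ᵐ x ∂μ, x ∈ ⋃ i, s i) :
    NullSingletonClass (μ.map f) := by
  refine ⟨fun y => ?_⟩
  rw [Measure.map_apply_of_aemeasurable hf (measurableSet_singleton y)]
  refine measure_mono_null_ae (t := ⋃ i, s i ∩ f ⁻¹' {y}) ?_
    (measure_iUnion_null fun i => Subsingleton.measure_zero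
      (fun _ ha _ hb => hinj i ha.1 hb.1 (ha.2.trans hb.2.symm)) μ)
  filter_upwards [hμ] with x hx hxy
  obtain ⟨i, hi⟩ := mem_iUnion.1 hx
  exact mem_iUnion.2 ⟨i, hi, hxy⟩

end Pieces

theorem w_transform_uniformity_preserving_general
    {Ω : Type*} [MeasurableSpace Ω] (P : Measure Ω) [IsProbabilityMeasure P]
    (X : Ω → ℝ) (hX : Measurable X)
    (F : ℝ → ℝ) (hF : F = distFun (P.map X)) (hFcont : Continuous F)
    (T : ℝ → ℝ)
    (K : ℕ∞) (t : ℕ → EReal)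
    -- `T` is pcsm: continuous and strictly monotone on each open piece
    (hTcont : ∀ k : ℕ, 1 ≤ k → (k : ℕ∞) ≤ K → ContinuousOn T (pieceO t k))
    (hTmono : ∀ k : ℕ, 1 ≤ k → (k : ℕ∞) ≤ K →
      StrictMonoOn T (pieceO t k) ∨ StrictAntiOn T (pieceO t k))
    -- the support of `F_X` has infimum `t_0` and supremum `t_K`
    (hsupp0 : sInf ((fun x : ℝ => (x : EReal)) '' suppSet F) = t 0)
    (hsuppK : sSup ((fun x : ℝ => (x : EReal)) '' suppSet F)
      = ⨆ k : {k : ℕ // (k : ℕ∞) ≤ K}, t k.1)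
    -- the W-transform of `F_X` and `T`
    (W : ℝ → ℝ) (hWmeas : Measurable W)
    (hW : ∀ u ∈ Set.Ioc (0 : ℝ) 1,
      W u = distFun (P.map (fun ω => T (X ω))) (T (quantileFun F u))) :
    ∀ {Ω' : Type*} [MeasurableSpace Ω'] (P' : Measure Ω') [IsProbabilityMeasure P']
      (U : Ω' → ℝ), Measurable U → P'.map U = unif01 →
      P'.map (fun ω => W (U ω)) = unif01 := by
  intro Ω' _ P' _ U hU hUlaw
  set μ := P.map X
  have : IsProbabilityMeasure μ := Measure.isProbabilityMeasure_map hX.aemeasurable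
  rw [distFun_eq_cdf μ] at hF
  subst hF
  have := (continuous_cdf_iff μ).1 hFcont
  set I := {k : ℕ // 1 ≤ k ∧ (k : ℕ∞) ≤ K}
  have hpieces : ∀ᵐ x ∂μ, x ∈ ⋃ k : I, pieceO t k :=
    ae_mem_iUnion_pieceO μ hFcont hsupp0 hsuppK
  have hT : AEMeasurable T μ := aemeasurable_of_continuousOn_iUnion
    (fun k : I => (isOpen_pieceO t k).measurableSet) (fun k => hTcont k.1 k.2.1 k.2.2) hpieces
  set ν := μ.map T
  have : IsProbabilityMeasure ν := Measure.isProbabilityMeasure_map hT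
  have : NullSingletonClass ν := nullSingletonClass_map_of_injOn hT
    (fun k : I => (hTmono k.1 k.2.1 k.2.2).elim StrictMonoOn.injOn StrictAntiOn.injOn) hpieces
  have hTX : P.map (fun ω => T (X ω)) = ν := (hT.map_map_of_aemeasurable hX.aemeasurable).symm
  have hWae : W =ᵐ[unif01] (cdf ν ∘ T) ∘ quantileFun (cdf μ) := by
    filter_upwards [ae_unif01_mem_Ioo] with u hu
    rw [hW u (Ioo_subset_Ioc_self hu), hTX, distFun_eq_cdf]
    rfl
  have hG : Measurable (cdf ν) := (monotone_cdf ν).measurable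
  calc P'.map (fun ω => W (U ω)) = unif01.map W := by
        rw [← hUlaw, Measure.map_map hWmeas hU]; rfl
    _ = μ.map (cdf ν ∘ T) := by
      rw [Measure.map_congr hWae, map_comp_quantileFun_cdf μ (hG.comp_aemeasurable hT)]
    _ = ν.map (cdf ν) := (hG.aemeasurable.map_map_of_aemeasurable hT).symm
    _ = unif01 := map_cdf_of_continuous ν ((continuous_cdf_iff ν).2 inferInstance)

/-- If `F_X` is a continuous distribution function whose support has
infimum `t_0` and supremum `t_K`, and `T` is pcsm with change points `(t_k)_{k=0}^K`,
`K ∈ ℕ ∪ {∞}`, then the W-transform `𝒲` of `F_X` and `T` is uniformity-preserving: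
`U ∼ U(0,1)` implies `𝒲(U) ∼ U(0,1)`. -/
theorem w_transform_uniformity_preserving
    {Ω : Type*} [MeasurableSpace Ω] (P : Measure Ω) [IsProbabilityMeasure P]
    (X : Ω → ℝ) (hX : Measurable X)
    (F : ℝ → ℝ) (hF : F = distFun (P.map X)) (hFcont : Continuous F)
    (T : ℝ → ℝ)
    (K : ℕ∞) (hK : 1 ≤ K) (t : ℕ → EReal)
    -- change points are strictly increasing
    (ht : ∀ k : ℕ, (k : ℕ∞) < K → t k < t (k + 1))
    -- `T` is pcsm: continuous and strictly monotone on each open piece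
    (hTcont : ∀ k : ℕ, 1 ≤ k → (k : ℕ∞) ≤ K → ContinuousOn T (pieceO t k))
    (hTmono : ∀ k : ℕ, 1 ≤ k → (k : ℕ∞) ≤ K →
      StrictMonoOn T (pieceO t k) ∨ StrictAntiOn T (pieceO t k))
    -- the support of `F_X` has infimum `t_0` and supremum `t_K`
    (hsupp0 : sInf ((fun x : ℝ => (x : EReal)) '' suppSet F) = t 0)
    (hsuppK : sSup ((fun x : ℝ => (x : EReal)) '' suppSet F)
      = ⨆ k : {k : ℕ // (k : ℕ∞) ≤ K}, t k.1)
    -- the W-transform of `F_X` and `T`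
    (W : ℝ → ℝ) (hWmeas : Measurable W)
    (hW : ∀ u ∈ Set.Ioc (0 : ℝ) 1,
      W u = distFun (P.map (fun ω => T (X ω))) (T (quantileFun F u))) :
    ∀ {Ω' : Type*} [MeasurableSpace Ω'] (P' : Measure Ω') [IsProbabilityMeasure P']
      (U : Ω' → ℝ), Measurable U → P'.map U = unif01 →
      P'.map (fun ω => W (U ω)) = unif01 :=
  w_transform_uniformity_preserving_general P X hX F hF hFcont T K t hTcont hTmono hsupp0 hsuppK W
    hWmeas hW
end

section
/- Let 𝒲 : [0,1] → [0,1] be piecewise differentiable, i.e., there is a partition of [0,1] into countably many intervals on whose interiors 𝒲 is differentiable with nonvanishing derivative. Then 𝒲 is uniformity-preserving if and only if for almost every v ∈ [0,1] one has Σ_{u ∈ 𝒲^{−1}({v})} 1/|𝒲′(u)| = 1. -/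
/-!
Cut the set `s = [0,1] \ S` where `𝒲` is differentiable into countably many measurable pieces on
each of which `𝒲` is close to an invertible affine map, hence injective. On an injective piece the
change of variables formula says that the pushforward of Lebesgue measure has density
`1 / |𝒲' (𝒲⁻¹ v)|` on the image of the piece; summing over the pieces, the pushforward of Lebesgue
measure on `s` has density `v ↦ ∑_{u ∈ s ∩ 𝒲⁻¹{v}} 1 / |𝒲' u|`. Since `𝒲 '' S` is countable, this
is almost everywhere the sum over all of `[0,1] ∩ 𝒲⁻¹{v}`, and `𝒲` preserves uniformity iff this
density is almost everywhere the indicator of `[0,1]`.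
-/

open MeasureTheory Set Function
open scoped ENNReal

theorem ENNReal.tsum_ofReal_eq_one_iff {ι : Type*} {a : ι → ℝ} (ha : ∀ i, 0 ≤ a i) :
    ∑' i, ENNReal.ofReal (a i) = 1 ↔ ∑' i, a i = 1 := by
  rw [← ENNReal.toReal_eq_one_iff, ENNReal.tsum_toReal_eq fun _ => ENNReal.ofReal_ne_top]
  simp only [ENNReal.toReal_ofReal (ha _)]

theorem ae_eq_indicator_one_iff {α : Type*} [MeasurableSpace α] {μ : Measure α} {A : Set α}
    (hA : MeasurableSet A) {g : α → ℝ≥0∞} (hg : ∀ x ∉ A, g x = 0) :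
    g =ᵐ[μ] A.indicator 1 ↔ ∀ᵐ x ∂μ.restrict A, g x = 1 := by
  rw [ae_restrict_iff' hA]
  refine Filter.eventually_congr (.of_forall fun x => ?_)
  by_cases hx : x ∈ A <;> simp [hx, hg]

section

variable {f f' : ℝ → ℝ} {s : Set ℝ}

theorem exists_partition_injOn_of_hasDerivWithinAt (hs : MeasurableSet s)
    (hf : ∀ x ∈ s, HasDerivWithinAt f (f' x) s x) (hf' : ∀ x ∈ s, f' x ≠ 0) :
    ∃ σ : ℕ → Set ℝ, Pairwise (Disjoint on σ) ∧ (∀ n, MeasurableSet (σ n)) ∧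
      ⋃ n, σ n = s ∧ ∀ n, InjOn f (σ n) := by
  -- On a piece where `f` is `|a| / 2`-close to `x ↦ a * x` with `a ≠ 0`, `|f x - f y|` is at
  -- least `|a| |x - y| / 2`.
  obtain ⟨t, A, ht_disj, ht_meas, hst, hA, hAf'⟩ :=
    exists_partition_approximatesLinearOn_of_hasFDerivWithinAt f s _
      (fun x hx => (hf x hx).hasFDerivWithinAt)
      (fun A => if A 1 = 0 then 1 else ‖A 1‖₊ / 2) (fun A => by split_ifs with h <;> simp [h])
  refine ⟨fun n => s ∩ t n, fun i j hij => (ht_disj hij).mono inter_subset_right inter_subset_right,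
    fun n => hs.inter (ht_meas n), by rw [← inter_iUnion, inter_eq_left.2 hst], fun n => ?_⟩
  rcases (s ∩ t n).eq_empty_or_nonempty with h | h
  · simp [h]
  obtain ⟨y, hy, hAy⟩ := hAf' (h.mono inter_subset_left) n
  intro a ha b hb hab
  have happrox := hA n a ha b hb
  simp only [hab, sub_self, hAy, ContinuousLinearMap.toSpanSingleton_apply, smul_eq_mul,
    zero_sub, norm_neg, norm_mul, Real.norm_eq_abs, one_mul, hf' y hy, ↓reduceIte,
    NNReal.coe_div, coe_nnnorm, NNReal.coe_ofNat] at happrox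
  have hy0 : 0 < |f' y| := abs_pos.2 (hf' y hy)
  have hle : |a - b| ≤ 0 := by nlinarith [abs_nonneg (a - b)]
  exact sub_eq_zero.1 (abs_nonpos_iff.1 hle)

/-- Taken in `ℝ≥0∞`, so that the sum over the preimage is meaningful even when it diverges. -/
noncomputable def preimageDensity (f f' : ℝ → ℝ) (s : Set ℝ) (v : ℝ) : ℝ≥0∞ :=
  ∑' u : ↥(s ∩ f ⁻¹' {v}), ENNReal.ofReal (1 / |f' u|)

theorem preimageDensity_eq_zero_of_notMem_image {v : ℝ} (hv : v ∉ f '' s) :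
    preimageDensity f f' s v = 0 := by
  have : s ∩ f ⁻¹' {v} = ∅ := eq_empty_of_forall_notMem fun x hx => hv ⟨x, hx.1, hx.2⟩
  rw [preimageDensity, this, tsum_empty]

theorem preimageDensity_congr {g : ℝ → ℝ} (h : EqOn f' g s) :
    preimageDensity f f' s = preimageDensity f g s :=
  funext fun _ => tsum_congr fun u => by rw [h u.2.1]

theorem preimageDensity_diff_of_notMem_image {t S : Set ℝ} {v : ℝ} (hv : v ∉ f '' S) :
    preimageDensity f f' (t \ S) v = preimageDensity f f' t v := by
  have : (t \ S) ∩ f ⁻¹' {v} = t ∩ f ⁻¹' {v} := by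
    ext x
    exact ⟨fun hx => ⟨hx.1.1, hx.2⟩, fun hx => ⟨⟨hx.1, fun hxS => hv ⟨x, hxS, hx.2⟩⟩, hx.2⟩⟩
  rw [preimageDensity, preimageDensity, this]

theorem preimageDensity_iUnion {ι : Type*} {σ : ι → Set ℝ} (hσ : Pairwise (Disjoint on σ)) :
    preimageDensity f f' (⋃ i, σ i) = ∑' i, preimageDensity f f' (σ i) := by
  funext v
  rw [ENNReal.tsum_apply, preimageDensity, iUnion_inter,
    ENNReal.tsum_biUnion (f := fun u => ENNReal.ofReal (1 / |f' u|))
      fun i _ j _ hij => (hσ hij).mono inter_subset_left inter_subset_left]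
  rfl

theorem preimageDensity_eq_extend (hf : InjOn f s) :
    preimageDensity f f' s =
      extend (s.domRestrict f) (fun x : s => ENNReal.ofReal (1 / |f' x|)) 0 := by
  funext v
  by_cases hv : ∃ a : s, s.domRestrict f a = v
  · obtain ⟨a, rfl⟩ := hv
    have hpre : s ∩ f ⁻¹' {s.domRestrict f a} = {a.1} := by
      ext x
      simp only [mem_inter_iff, mem_preimage, mem_singleton_iff]
      exact ⟨fun hx => hf hx.1 a.2 hx.2, by rintro rfl; exact ⟨a.2, rfl⟩⟩
    rw [(injOn_iff_injective.1 hf).extend_apply, preimageDensity, hpre]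
    exact tsum_singleton a.1 fun x => ENNReal.ofReal (1 / |f' x|)
  · rw [extend_apply' _ _ _ hv, Pi.zero_apply,
      preimageDensity_eq_zero_of_notMem_image fun ⟨x, hx, hfx⟩ => hv ⟨⟨x, hx⟩, hfx⟩]

theorem preimageDensity_apply_of_injOn (hinj : InjOn f s) {x : ℝ} (hx : x ∈ s) :
    preimageDensity f f' s (f x) = ENNReal.ofReal (1 / |f' x|) := by
  rw [preimageDensity_eq_extend hinj]
  exact (injOn_iff_injective.1 hinj).extend_apply _ _ ⟨x, hx⟩

theorem measurable_preimageDensity_of_injOn (hs : MeasurableSet s)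
    (hf : ∀ x ∈ s, HasDerivWithinAt f (f' x) s x) (hinj : InjOn f s) (hf'm : Measurable f') :
    Measurable (preimageDensity f f' s) := by
  rw [preimageDensity_eq_extend hinj]
  exact (measurableEmbedding_of_fderivWithin hs (fun x hx => (hf x hx).hasFDerivWithinAt)
    hinj).measurable_extend
    ((measurable_const.div hf'm.abs).ennreal_ofReal.comp measurable_subtype_coe) measurable_const

theorem map_restrict_eq_withDensity_preimageDensity_of_injOn (hs : MeasurableSet s)
    (hf : ∀ x ∈ s, HasDerivWithinAt f (f' x) s x) (hf' : ∀ x ∈ s, f' x ≠ 0) (hinj : InjOn f s) :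
    Measure.map f (volume.restrict s) = volume.withDensity (preimageDensity f f' s) := by
  have hemb := measurableEmbedding_of_fderivWithin hs
    (fun x hx => (hf x hx).hasFDerivWithinAt) hinj
  have hcont : ContinuousOn f s := fun x hx => (hf x hx).continuousWithinAt
  ext A hA
  have hu : MeasurableSet (s ∩ f ⁻¹' A) := by
    rw [← Subtype.image_preimage_coe]
    exact hs.subtype_image (hemb.measurable hA)
  have hsupp : support (preimageDensity f f' s) ⊆ f '' s :=
    support_subset_iff'.2 fun _ hv => preimageDensity_eq_zero_of_notMem_image hv
  rw [Measure.map_apply_of_aemeasurable (hcont.aemeasurable hs) hA, Measure.restrict_apply' hs,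
    withDensity_apply' _ A, ← setLIntegral_eq_of_support_subset hsupp,
    Measure.restrict_restrict' hA, inter_comm, ← image_inter_preimage,
    lintegral_image_eq_lintegral_abs_deriv_mul hu (fun x hx => (hf x hx.1).mono inter_subset_left)
      (hinj.mono inter_subset_left), ← setLIntegral_one]
  refine setLIntegral_congr_fun hu fun x hx => ?_
  rw [preimageDensity_apply_of_injOn hinj hx.1, ← ENNReal.ofReal_mul (abs_nonneg _),
    mul_one_div_cancel (abs_ne_zero.2 (hf' x hx.1)), ENNReal.ofReal_one]

theorem measurable_preimageDensity (hs : MeasurableSet s)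
    (hf : ∀ x ∈ s, HasDerivWithinAt f (f' x) s x) (hf' : ∀ x ∈ s, f' x ≠ 0)
    (hf'm : Measurable f') : Measurable (preimageDensity f f' s) := by
  obtain ⟨σ, hdisj, hmeas, hunion, hinj⟩ := exists_partition_injOn_of_hasDerivWithinAt hs hf hf'
  have hσs n : σ n ⊆ s := hunion ▸ subset_iUnion σ n
  rw [← hunion, preimageDensity_iUnion hdisj]
  exact .tsum' fun n => measurable_preimageDensity_of_injOn (hmeas n)
    (fun x hx => (hf x (hσs n hx)).mono (hσs n)) (hinj n) hf'm

theorem map_restrict_eq_withDensity_preimageDensity (hs : MeasurableSet s)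
    (hf : ∀ x ∈ s, HasDerivWithinAt f (f' x) s x) (hf' : ∀ x ∈ s, f' x ≠ 0)
    (hf'm : Measurable f') :
    Measure.map f (volume.restrict s) = volume.withDensity (preimageDensity f f' s) := by
  obtain ⟨σ, hdisj, hmeas, hunion, hinj⟩ := exists_partition_injOn_of_hasDerivWithinAt hs hf hf'
  have hσs n : σ n ⊆ s := hunion ▸ subset_iUnion σ n
  have hfσ n : ∀ x ∈ σ n, HasDerivWithinAt f (f' x) (σ n) x :=
    fun x hx => (hf x (hσs n hx)).mono (hσs n)
  have hfm : AEMeasurable f (Measure.sum fun n => volume.restrict (σ n)) := by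
    rw [← Measure.restrict_iUnion hdisj hmeas, hunion]
    exact ContinuousOn.aemeasurable (fun x hx => (hf x hx).continuousWithinAt) hs
  rw [← hunion, Measure.restrict_iUnion hdisj hmeas, Measure.map_sum hfm,
    preimageDensity_iUnion hdisj,
    withDensity_tsum fun n => measurable_preimageDensity_of_injOn (hmeas n) (hfσ n) (hinj n) hf'm]
  exact congrArg Measure.sum <| funext fun n =>
    map_restrict_eq_withDensity_preimageDensity_of_injOn (hmeas n) (hfσ n)
      (fun x hx => hf' x (hσs n hx)) (hinj n)

end

theorem uniformity_preserving_iff_preimage_derivative_sum_general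
    (W : ℝ → ℝ)
    (hWmaps : Set.MapsTo W (Set.Icc 0 1) (Set.Icc 0 1))
    -- `𝒲` is piecewise differentiable with nonvanishing derivative `𝒲'`
    (W' : ℝ → ℝ) (S : Set ℝ) (hS : S.Countable)
    (hdiff : ∀ u ∈ Set.Icc (0 : ℝ) 1 \ S, HasDerivAt W (W' u) u ∧ W' u ≠ 0) :
    Measure.map W unif01 = unif01 ↔
      ∀ᵐ v ∂(volume.restrict (Set.Icc (0 : ℝ) 1)),
        ∑' u : ↥(Set.Icc (0 : ℝ) 1 ∩ W ⁻¹' {v}), (1 : ℝ) / |W' u| = 1 := by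
  set s := Icc (0 : ℝ) 1 \ S
  have hs : MeasurableSet s := measurableSet_Icc.diff hS.measurableSet
  have hderiv : EqOn (deriv W) W' s := fun u hu => (hdiff u hu).1.deriv
  have hW : ∀ u ∈ s, HasDerivWithinAt W (deriv W u) s u := fun u hu =>
    (hderiv hu ▸ (hdiff u hu).1).hasDerivWithinAt
  have hW0 : ∀ u ∈ s, deriv W u ≠ 0 := fun u hu => hderiv hu ▸ (hdiff u hu).2
  have hunif : unif01 = volume.withDensity ((Icc 0 1).indicator 1) := by
    rw [withDensity_indicator_one measurableSet_Icc]
    exact Measure.restrict_congr_set Ioc_ae_eq_Icc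
  have hmap : Measure.map W unif01 = volume.withDensity (preimageDensity W (deriv W) s) := by
    rw [unif01, Measure.restrict_congr_set (Ioc_ae_eq_Icc.trans
      (sdiff_null_ae_eq_self (hS.measure_zero _)).symm)]
    exact map_restrict_eq_withDensity_preimageDensity hs hW hW0 (measurable_deriv W)
  have hdens : preimageDensity W (deriv W) s =ᵐ[volume] preimageDensity W W' (Icc 0 1) := by
    filter_upwards [measure_eq_zero_iff_ae_notMem.1 ((hS.image W).measure_zero volume)] with v hv
    rw [preimageDensity_congr hderiv, preimageDensity_diff_of_notMem_image hv]
  rw [hmap, hunif, withDensity_eq_iff_of_sigmaFinite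
    (measurable_preimageDensity hs hW hW0 (measurable_deriv W)).aemeasurable
    (measurable_one.indicator measurableSet_Icc).aemeasurable, hdens.congr_left,
    ae_eq_indicator_one_iff measurableSet_Icc fun v hv =>
      preimageDensity_eq_zero_of_notMem_image fun hv' => hv (hWmaps.image_subset hv')]
  simp only [preimageDensity,
    ENNReal.tsum_ofReal_eq_one_iff fun u => one_div_nonneg.2 (abs_nonneg _)]

/-- a piecewise differentiable map `𝒲 : [0,1] → [0,1]` (differentiable
off a countable set, with nonvanishing derivative there) is uniformity-preserving if
and only if for almost every `v ∈ [0,1]` one has `Σ_{u ∈ 𝒲⁻¹({v})} 1/|𝒲'(u)| = 1`. -/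
theorem uniformity_preserving_iff_preimage_derivative_sum
    (W : ℝ → ℝ) (hWmeas : Measurable W)
    (hWmaps : Set.MapsTo W (Set.Icc 0 1) (Set.Icc 0 1))
    -- `𝒲` is piecewise differentiable with nonvanishing derivative `𝒲'`
    (W' : ℝ → ℝ) (S : Set ℝ) (hS : S.Countable)
    (hdiff : ∀ u ∈ Set.Icc (0 : ℝ) 1 \ S, HasDerivAt W (W' u) u ∧ W' u ≠ 0) :
    Measure.map W unif01 = unif01 ↔
      ∀ᵐ v ∂(volume.restrict (Set.Icc (0 : ℝ) 1)),
        ∑' u : ↥(Set.Icc (0 : ℝ) 1 ∩ W ⁻¹' {v}), (1 : ℝ) / |W' u| = 1 :=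
  uniformity_preserving_iff_preimage_derivative_sum_general W hWmaps W' S hS hdiff
end

section
/- For j = 1,…,d let 𝒲_j : [0,1] → [0,1] be a W-transform with change points 0 = δ_{j,0} < δ_{j,1} < ⋯ < δ_{j,K_j} = 1 (K_j ∈ ℕ ∪ {∞}), piecewise restrictions 𝒲_{j|k} = 𝒲_j|_{(δ_{j,k−1}, δ_{j,k}]}, and index sets I_j ⊆ {1,…,K_j} such that 𝒲_{j|k} is increasing if and only if k ∈ I_j. Let U = (U_1,…,U_d) be a random vector with U(0,1) margins and joint distribution function (copula) C. Then the joint distribution function of (𝒲_1(U_1),…,𝒲_d(U_d)) is the copula C_𝒲(u_1,…,u_d) = Σ_{k_d=1}^{K_d} ⋯ Σ_{k_1=1}^{K_1} P(U ∈ ∏_{j=1}^d 𝓘_j^{(k_j)}), where 𝓘_j^{(k_j)} = (δ_{j,k_j−1}, 𝒲_{j|k_j}^{−1}(u_j)] if k_j ∈ I_j and 𝓘_j^{(k_j)} = (𝒲_{j|k_j}^{−1}(u_j), δ_{j,k_j}] if k_j ∉ I_j. -/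
open MeasureTheory Set

/-- The local inverse of an increasing piece of `W` on `(a, b]`,
`inf {u ∈ (a,b] : W u ≥ v}`, with the convention `inf ∅ = b`. -/
noncomputable def locInvI (W : ℝ → ℝ) (a b v : ℝ) : ℝ :=
  sInf ({u | u ∈ Set.Ioc a b ∧ v ≤ W u} ∪ {b})

/-- The local inverse of a decreasing piece of `W` on `(a, b]`,
`sup {u ∈ (a,b] : W u ≥ v}`, with the convention `sup ∅ = a`. -/
noncomputable def locInvD (W : ℝ → ℝ) (a b v : ℝ) : ℝ :=
  sSup ({u | u ∈ Set.Ioc a b ∧ v ≤ W u} ∪ {a})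

/-- The marginal interval `𝓘_j^{(k_j)}` appearing in the W-transformed copula:
`(δ_{j,k-1}, 𝒲_{j|k}^{-1}(u)]` for increasing pieces and
`(𝒲_{j|k}^{-1}(u), δ_{j,k}]` for decreasing pieces. -/
noncomputable def margInterval (W : ℝ → ℝ) (δ : ℕ → ℝ) (I : Finset ℕ) (k : ℕ)
    (u : ℝ) : Set ℝ :=
  if k ∈ I then Set.Ioc (δ (k - 1)) (locInvI W (δ (k - 1)) (δ k) u)
  else Set.Ioc (locInvD W (δ (k - 1)) (δ k) u) (δ k)

lemma delta_lt {δ : ℕ → ℝ} {K : ℕ} (h : ∀ k, k < K → δ k < δ (k+1)) :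
    ∀ n, n ≤ K → ∀ m, m < n → δ m < δ n := by
  intro n hn
  induction n with
  | zero => omega
  | succ n ih =>
    intro m hm
    rcases Nat.lt_succ_iff_lt_or_eq.mp hm with h' | h'
    · exact (ih (by omega) m h').trans (h n (by omega))
    · subst h'; exact h m (by omega)

lemma delta_le {δ : ℕ → ℝ} {K : ℕ} (h : ∀ k, k < K → δ k < δ (k+1))
    {m n : ℕ} (hmn : m ≤ n) (hn : n ≤ K) : δ m ≤ δ n := by
  rcases eq_or_lt_of_le hmn with rfl | h'
  · exact le_rfl
  · exact (delta_lt h n hn m h').le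

lemma exists_piece {δ : ℕ → ℝ} {K : ℕ} {x : ℝ}
    (hx : x ∈ Set.Ioc (δ 0) (δ K)) :
    ∃ k, 1 ≤ k ∧ k ≤ K ∧ x ∈ Set.Ioc (δ (k-1)) (δ k) := by
  classical
  have hex : ∃ k, x ≤ δ k := ⟨K, hx.2⟩
  set k := Nat.find hex with hk
  have hspec : x ≤ δ k := Nat.find_spec hex
  have hkK : k ≤ K := Nat.find_le hx.2
  have hk1 : 1 ≤ k := by
    by_contra h
    have : k = 0 := by omega
    rw [this] at hspec
    exact absurd hspec (not_le.mpr hx.1)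
  have hmin : ¬ x ≤ δ (k-1) := Nat.find_min hex (by omega)
  exact ⟨k, hk1, hkK, ⟨not_le.mp hmin, hspec⟩⟩

lemma pieces_disj {δ : ℕ → ℝ} {K : ℕ} (h : ∀ k, k < K → δ k < δ (k+1)) {k k' : ℕ}
    (hk : 1 ≤ k) (hk2 : k ≤ K) (hk' : 1 ≤ k') (hk2' : k' ≤ K) (hne : k ≠ k')
    {x : ℝ} (h1 : x ∈ Set.Ioc (δ (k-1)) (δ k)) (h2 : x ∈ Set.Ioc (δ (k'-1)) (δ k')) :
    False := by
  rcases hne.lt_or_gt with hlt | hlt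
  · have : δ k ≤ δ (k'-1) := delta_le h (by omega) (by omega)
    have := h1.2.trans this
    exact absurd (this.trans_lt h2.1) (lt_irrefl x)
  · have : δ k' ≤ δ (k-1) := delta_le h (by omega) (by omega)
    have := h2.2.trans this
    exact absurd (this.trans_lt h1.1) (lt_irrefl x)

lemma locInvI_le {W : ℝ → ℝ} {a b : ℝ} (hab : a ≤ b) (v : ℝ) :
    locInvI W a b v ≤ b := by
  apply csInf_le
  · exact ⟨a, by rintro y (⟨⟨h1, _⟩, _⟩ | rfl) <;> [exact h1.le; exact hab]⟩
  · exact Or.inr rfl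

lemma le_locInvD {W : ℝ → ℝ} {a b : ℝ} (hab : a ≤ b) (v : ℝ) :
    a ≤ locInvD W a b v := by
  apply le_csSup
  · exact ⟨b, by rintro y (⟨⟨_, h2⟩, _⟩ | rfl) <;> [exact h2; exact hab]⟩
  · exact Or.inr rfl

lemma locInvI_cases {W : ℝ → ℝ} {a b v : ℝ}
    (hm : StrictMonoOn W (Set.Ioc a b)) {x : ℝ} (hx : x ∈ Set.Ioc a b) :
    (W x ≤ v → x ∈ Set.Ioc a (locInvI W a b v)) ∧
    (x ∈ Set.Ioc a (locInvI W a b v) → x = locInvI W a b v ∨ W x ≤ v) := by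
  have hab : a ≤ b := hx.1.le.trans hx.2
  have hbdd : BddBelow ({u | u ∈ Set.Ioc a b ∧ v ≤ W u} ∪ {b}) :=
    ⟨a, by rintro y (⟨⟨h1, _⟩, _⟩ | rfl) <;> [exact h1.le; exact hab]⟩
  constructor
  · intro hWx
    refine ⟨hx.1, le_csInf ⟨b, Or.inr rfl⟩ ?_⟩
    rintro y (⟨hy, hvy⟩ | rfl)
    · by_contra hlt
      push_neg at hlt
      have := hm hy hx hlt
      linarith
    · exact hx.2
  · intro hxm
    by_cases hWx : W x ≤ v
    · exact Or.inr hWx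
    · push_neg at hWx
      have hle : locInvI W a b v ≤ x := csInf_le hbdd (Or.inl ⟨hx, hWx.le⟩)
      exact Or.inl (le_antisymm hxm.2 hle)

lemma locInvD_cases {W : ℝ → ℝ} {a b v : ℝ}
    (hm : StrictAntiOn W (Set.Ioc a b)) {x : ℝ} (hx : x ∈ Set.Ioc a b) :
    (W x ≤ v → x = locInvD W a b v ∨ x ∈ Set.Ioc (locInvD W a b v) b) ∧
    (x ∈ Set.Ioc (locInvD W a b v) b → W x ≤ v) := by
  have hab : a ≤ b := hx.1.le.trans hx.2
  have hbdd : BddAbove ({u | u ∈ Set.Ioc a b ∧ v ≤ W u} ∪ {a}) :=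
    ⟨b, by rintro y (⟨⟨_, h2⟩, _⟩ | rfl) <;> [exact h2; exact hab]⟩
  constructor
  · intro hWx
    have hub : locInvD W a b v ≤ x := by
      apply csSup_le ⟨a, Or.inr rfl⟩
      rintro y (⟨hy, hvy⟩ | rfl)
      · by_contra hlt
        push_neg at hlt
        have := hm hx hy hlt
        linarith
      · exact hx.1.le
    rcases eq_or_lt_of_le hub with h | h
    · exact Or.inl h.symm
    · exact Or.inr ⟨h, hx.2⟩
  · intro hxm
    by_contra hWx
    push_neg at hWx
    have : x ≤ locInvD W a b v := le_csSup hbdd (Or.inl ⟨hx, hWx.le⟩)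
    linarith [hxm.1]

/-- the joint distribution function of `(𝒲_1(U_1), …, 𝒲_d(U_d))` for
`(U_1, …, U_d) ∼ C` is the copula
`C_𝒲(u) = Σ_{k_d=1}^{K_d} ⋯ Σ_{k_1=1}^{K_1} P(U ∈ ∏_j 𝓘_j^{(k_j)})`. -/
theorem w_transformed_copula_formula
    (d : ℕ)
    {Ω : Type*} [MeasurableSpace Ω] (P : Measure Ω) [IsProbabilityMeasure P]
    -- the random vector `U ∼ C` with `U(0,1)` margins
    (U : Fin d → Ω → ℝ) (hU : ∀ j, Measurable (U j))
    (hUlaw : ∀ j, P.map (U j) = unif01)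
    -- the W-transforms `𝒲_j` with their change points and monotonicity structure
    (W : Fin d → ℝ → ℝ) (hWmeas : ∀ j, Measurable (W j))
    (hWunif : ∀ j, Measure.map (W j) unif01 = unif01)
    (K : Fin d → ℕ) (hK : ∀ j, 1 ≤ K j)
    (δ : Fin d → ℕ → ℝ)
    (hδ0 : ∀ j, δ j 0 = 0) (hδK : ∀ j, δ j (K j) = 1)
    (hδ : ∀ j, ∀ k : ℕ, k < K j → δ j k < δ j (k + 1))
    (I : Fin d → Finset ℕ) (hI : ∀ j, I j ⊆ Finset.Icc 1 (K j))
    (hmono : ∀ j, ∀ k ∈ Finset.Icc 1 (K j),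
      (k ∈ I j → StrictMonoOn (W j) (Set.Ioc (δ j (k - 1)) (δ j k))) ∧
      (k ∉ I j → StrictAntiOn (W j) (Set.Ioc (δ j (k - 1)) (δ j k)))) :
    ∀ u : Fin d → ℝ, (∀ j, u j ∈ Set.Icc (0 : ℝ) 1) →
      (P {ω | ∀ j, W j (U j ω) ≤ u j}).toReal
        = ∑ k ∈ Fintype.piFinset (fun j => Finset.Icc 1 (K j)),
            (P {ω | ∀ j, U j ω ∈ margInterval (W j) (δ j) (I j) (k j) (u j)}).toReal := by
  classical
  intro u hu
  -- the pieces of the event, per coordinate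
  set S : Fin d → ℕ → Set ℝ := fun j k =>
    Set.Ioc (δ j (k-1)) (δ j k) ∩ {x | W j x ≤ u j} with hSdef
  -- preimages of null sets are null
  have hmap : ∀ (j : Fin d) (s : Set ℝ), MeasurableSet s →
      P ((U j) ⁻¹' s) = unif01 s := by
    intro j s hs
    rw [← hUlaw j, Measure.map_apply (hU j) hs]
  have hpt : ∀ (j : Fin d) (x : ℝ), P ((U j) ⁻¹' {x}) = 0 := by
    intro j x
    rw [hmap j _ (measurableSet_singleton x)]
    unfold unif01
    rw [Measure.restrict_apply (measurableSet_singleton x)]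
    exact measure_mono_null Set.inter_subset_left (measure_singleton x)
  have h01 : ∀ (j : Fin d), P ((U j) ⁻¹' (Set.Ioc (0:ℝ) 1)ᶜ) = 0 := by
    intro j
    rw [hmap j _ measurableSet_Ioc.compl]
    unfold unif01
    rw [Measure.restrict_apply measurableSet_Ioc.compl]
    simp
  -- key comparison of S with margInterval, off one point
  have key : ∀ (j : Fin d), ∀ k ∈ Finset.Icc 1 (K j), ∃ pt : ℝ,
      ∀ x : ℝ, x ≠ pt →
        (x ∈ S j k ↔ x ∈ margInterval (W j) (δ j) (I j) k (u j)) := by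
    intro j k hk
    have hk' := Finset.mem_Icc.mp hk
    have hab : δ j (k-1) < δ j k :=
      delta_lt (hδ j) k hk'.2 (k-1) (by omega)
    by_cases hkI : k ∈ I j
    · refine ⟨locInvI (W j) (δ j (k-1)) (δ j k) (u j), fun x hxpt => ?_⟩
      have hm := (hmono j k hk).1 hkI
      rw [margInterval, if_pos hkI]
      constructor
      · rintro ⟨hx1, hx2⟩
        exact (locInvI_cases hm hx1).1 hx2
      · intro hx
        have hxab : x ∈ Set.Ioc (δ j (k-1)) (δ j k) :=
          ⟨hx.1, hx.2.trans (locInvI_le hab.le (u j))⟩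
        rcases (locInvI_cases hm hxab).2 hx with h | h
        · exact absurd h hxpt
        · exact ⟨hxab, h⟩
    · refine ⟨locInvD (W j) (δ j (k-1)) (δ j k) (u j), fun x hxpt => ?_⟩
      have hm := (hmono j k hk).2 hkI
      rw [margInterval, if_neg hkI]
      constructor
      · rintro ⟨hx1, hx2⟩
        rcases (locInvD_cases hm hx1).1 hx2 with h | h
        · exact absurd h hxpt
        · exact h
      · intro hx
        have hxab : x ∈ Set.Ioc (δ j (k-1)) (δ j k) :=
          ⟨(le_locInvD hab.le (u j)).trans_lt hx.1, hx.2⟩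
        exact ⟨hxab, (locInvD_cases hm hxab).2 hx⟩
  -- measurability
  have hSmeas : ∀ (j : Fin d) (k : ℕ), MeasurableSet (S j k) := by
    intro j k
    exact measurableSet_Ioc.inter ((hWmeas j) measurableSet_Iic)
  set A : (Fin d → ℕ) → Set Ω := fun k => ⋂ j, (U j) ⁻¹' (S j (k j)) with hAdef
  have hAmeas : ∀ k, MeasurableSet (A k) := fun k =>
    MeasurableSet.iInter fun j => (hU j) (hSmeas j (k j))
  -- Step 1: the LHS event equals the union of the A k, a.e.
  have hG : ∀ᵐ ω ∂P, ∀ j, U j ω ∈ Set.Ioc (0:ℝ) 1 := by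
    rw [ae_all_iff]
    intro j
    rw [ae_iff]
    exact h01 j
  have hEA : P {ω | ∀ j, W j (U j ω) ≤ u j}
      = P (⋃ k ∈ Fintype.piFinset (fun j => Finset.Icc 1 (K j)), A k) := by
    apply measure_congr
    rw [Filter.eventuallyEq_set]
    filter_upwards [hG] with ω hω
    constructor
    · intro hE
      have hex : ∀ j, ∃ k, 1 ≤ k ∧ k ≤ K j ∧
          U j ω ∈ Set.Ioc (δ j (k-1)) (δ j k) := by
        intro j
        apply exists_piece
        rw [hδ0 j, hδK j]
        exact hω j
      choose κ hκ1 hκ2 hκ3 using hex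
      refine Set.mem_iUnion₂.mpr ⟨κ, ?_, ?_⟩
      · exact Fintype.mem_piFinset.mpr fun j => Finset.mem_Icc.mpr ⟨hκ1 j, hκ2 j⟩
      · exact Set.mem_iInter.mpr fun j => ⟨hκ3 j, hE j⟩
    · intro hmem
      rcases Set.mem_iUnion₂.mp hmem with ⟨k, _, hωA⟩
      intro j
      exact (Set.mem_iInter.mp hωA j).2
  -- Step 2: the union is disjoint
  have hdisj : (↑(Fintype.piFinset (fun j => Finset.Icc 1 (K j))) :
      Set (Fin d → ℕ)).PairwiseDisjoint A := by
    intro k hk k' hk' hne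
    rw [Function.onFun, Set.disjoint_left]
    intro ω hωk hωk'
    rcases Function.ne_iff.mp hne with ⟨j, hj⟩
    have h1 := Set.mem_iInter.mp hωk j
    have h2 := Set.mem_iInter.mp hωk' j
    have hk := Finset.mem_Icc.mp (Fintype.mem_piFinset.mp (Finset.mem_coe.mp hk) j)
    have hk' := Finset.mem_Icc.mp (Fintype.mem_piFinset.mp (Finset.mem_coe.mp hk') j)
    exact pieces_disj (hδ j) hk.1 hk.2 hk'.1 hk'.2 hj h1.1 h2.1
  have hsum : P (⋃ k ∈ Fintype.piFinset (fun j => Finset.Icc 1 (K j)), A k)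
      = ∑ k ∈ Fintype.piFinset (fun j => Finset.Icc 1 (K j)), P (A k) :=
    measure_biUnion_finset hdisj fun k _ => hAmeas k
  -- Step 3: each term equals the margInterval term
  have hterm : ∀ k ∈ Fintype.piFinset (fun j => Finset.Icc 1 (K j)),
      P (A k) = P {ω | ∀ j, U j ω ∈ margInterval (W j) (δ j) (I j) (k j) (u j)} := by
    intro k hkmem
    have hkj : ∀ j, k j ∈ Finset.Icc 1 (K j) := Fintype.mem_piFinset.mp hkmem
    have hptex := fun j => key j (k j) (hkj j)
    choose pt hpt' using hptex
    have hne : ∀ᵐ ω ∂P, ∀ j, U j ω ≠ pt j := by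
      rw [ae_all_iff]
      intro j
      rw [ae_iff]
      simp only [ne_eq, not_not]
      exact hpt j (pt j)
    apply measure_congr
    rw [Filter.eventuallyEq_set]
    filter_upwards [hne] with ω hω
    have : ∀ j, (U j ω ∈ S j (k j) ↔
        U j ω ∈ margInterval (W j) (δ j) (I j) (k j) (u j)) :=
      fun j => hpt' j (U j ω) (hω j)
    constructor
    · intro h j
      exact (this j).mp (Set.mem_iInter.mp h j)
    · intro h
      exact Set.mem_iInter.mpr fun j => (this j).mpr (h j)
  -- conclude
  rw [hEA, hsum, Finset.sum_congr rfl hterm]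
  exact ENNReal.toReal_sum fun k _ => measure_ne_top P _
end

section
/- Let U = (U_1,…,U_d) have U(0,1) margins and joint distribution function C, let 𝒲_1,…,𝒲_d be W-transforms with change points {δ_{j,k}}, piecewise restrictions 𝒲_{j|k}, and index sets I_j of increasing pieces, and let C_𝒲 be the joint distribution function of (𝒲_1(U_1),…,𝒲_d(U_d)). Then for all 0 ≤ a ≤ b ≤ 1 componentwise, the C_𝒲-volume satisfies P(a_1 < 𝒲_1(U_1) ≤ b_1, …, a_d < 𝒲_d(U_d) ≤ b_d) = Σ_{k_d=1}^{K_d} ⋯ Σ_{k_1=1}^{K_1} P(U ∈ ∏_{j=1}^d (𝒲_{j|k_j}^{−1}(a_j^{1{k_j∉I_j}} b_j^{1{k_j∈I_j}}), 𝒲_{j|k_j}^{−1}(a_j^{1{k_j∈I_j}} b_j^{1{k_j∉I_j}})]), i.e., for each j the interval is (𝒲_{j|k_j}^{−1}(a_j), 𝒲_{j|k_j}^{−1}(b_j)] if k_j ∈ I_j and (𝒲_{j|k_j}^{−1}(b_j), 𝒲_{j|k_j}^{−1}(a_j)] if k_j ∉ I_j. -/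
open MeasureTheory Set

/-- The local inverse `𝒲_{|k}^{-1}` of the `k`-th piece of `W` (increasing for
`k ∈ I`, decreasing otherwise). -/
noncomputable def pieceInv (W : ℝ → ℝ) (δ : ℕ → ℝ) (I : Finset ℕ) (k : ℕ)
    (v : ℝ) : ℝ :=
  if k ∈ I then locInvI W (δ (k - 1)) (δ k) v else locInvD W (δ (k - 1)) (δ k) v

namespace WTaux

lemma locInvI_mem {W : ℝ → ℝ} {c d : ℝ} (h : c ≤ d) (v : ℝ) :
    locInvI W c d v ∈ Set.Icc c d := by
  have hlb : c ∈ lowerBounds ({u | u ∈ Set.Ioc c d ∧ v ≤ W u} ∪ {d}) := by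
    rintro x (⟨hx, -⟩ | rfl)
    · exact hx.1.le
    · exact h
  exact ⟨le_csInf ⟨d, Or.inr rfl⟩ hlb, csInf_le ⟨c, hlb⟩ (Or.inr rfl)⟩

lemma locInvD_mem {W : ℝ → ℝ} {c d : ℝ} (h : c ≤ d) (v : ℝ) :
    locInvD W c d v ∈ Set.Icc c d := by
  have hub : d ∈ upperBounds ({u | u ∈ Set.Ioc c d ∧ v ≤ W u} ∪ {c}) := by
    rintro x (⟨hx, -⟩ | rfl)
    · exact hx.2
    · exact h
  exact ⟨le_csSup ⟨d, hub⟩ (Or.inr rfl), csSup_le ⟨c, Or.inr rfl⟩ hub⟩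

lemma inc_iff {W : ℝ → ℝ} {c d a b u : ℝ}
    (hW : StrictMonoOn W (Set.Ioc c d)) (hu : u ∈ Set.Ioc c d)
    (h1 : u ≠ locInvI W c d a) (h2 : u ≠ locInvI W c d b) :
    (a < W u ∧ W u ≤ b) ↔ (locInvI W c d a < u ∧ u ≤ locInvI W c d b) := by
  have hcd : c ≤ d := hu.1.le.trans hu.2
  have hne : ∀ v : ℝ, ({x | x ∈ Set.Ioc c d ∧ v ≤ W x} ∪ {d}).Nonempty :=
    fun v => ⟨d, Or.inr rfl⟩
  have hbdd : ∀ v : ℝ, BddBelow ({x | x ∈ Set.Ioc c d ∧ v ≤ W x} ∪ {d}) := by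
    intro v
    refine ⟨c, ?_⟩
    rintro x (⟨hx, -⟩ | rfl)
    · exact hx.1.le
    · exact hcd
  constructor
  · rintro ⟨hau, hub⟩
    constructor
    · exact (csInf_le (hbdd a) (Or.inl ⟨hu, hau.le⟩)).lt_of_ne (Ne.symm h1)
    · by_contra hlt
      push_neg at hlt
      obtain ⟨x, hx, hxu⟩ := exists_lt_of_csInf_lt (hne b) hlt
      rcases hx with ⟨hx, hbx⟩ | rfl
      · exact absurd (hW hx hu hxu) (not_lt.2 (hub.trans hbx))
      · exact absurd hxu (not_lt.2 hu.2)
  · rintro ⟨hau, hub⟩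
    constructor
    · by_contra hwa
      push_neg at hwa
      have hlow : u ∈ lowerBounds ({x | x ∈ Set.Ioc c d ∧ a ≤ W x} ∪ {d}) := by
        rintro x (⟨hx, hax⟩ | rfl)
        · by_contra hxu
          push_neg at hxu
          exact absurd (hW hx hu hxu) (not_lt.2 (hwa.trans hax))
        · exact hu.2
      exact absurd (le_csInf (hne a) hlow) (not_le.2 hau)
    · by_contra hbw
      push_neg at hbw
      exact h2 (le_antisymm hub (csInf_le (hbdd b) (Or.inl ⟨hu, hbw.le⟩)))

lemma dec_iff {W : ℝ → ℝ} {c d a b u : ℝ}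
    (hW : StrictAntiOn W (Set.Ioc c d)) (hu : u ∈ Set.Ioc c d)
    (h1 : u ≠ locInvD W c d b) (h2 : u ≠ locInvD W c d a) :
    (a < W u ∧ W u ≤ b) ↔ (locInvD W c d b < u ∧ u ≤ locInvD W c d a) := by
  have hcd : c ≤ d := hu.1.le.trans hu.2
  have hne : ∀ v : ℝ, ({x | x ∈ Set.Ioc c d ∧ v ≤ W x} ∪ {c}).Nonempty :=
    fun v => ⟨c, Or.inr rfl⟩
  have hbdd : ∀ v : ℝ, BddAbove ({x | x ∈ Set.Ioc c d ∧ v ≤ W x} ∪ {c}) := by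
    intro v
    refine ⟨d, ?_⟩
    rintro x (⟨hx, -⟩ | rfl)
    · exact hx.2
    · exact hcd
  constructor
  · rintro ⟨hau, hub⟩
    refine ⟨?_, le_csSup (hbdd a) (Or.inl ⟨hu, hau.le⟩)⟩
    have hle : locInvD W c d b ≤ u := by
      apply csSup_le (hne b)
      rintro x (⟨hx, hbx⟩ | rfl)
      · by_contra hxu
        push_neg at hxu
        exact absurd (hW hu hx hxu) (not_lt.2 (hub.trans hbx))
      · exact hu.1.le
    exact hle.lt_of_ne (Ne.symm h1)
  · rintro ⟨hbu, hua⟩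
    constructor
    · by_contra hwa
      push_neg at hwa
      have hle : locInvD W c d a ≤ u := by
        apply csSup_le (hne a)
        rintro x (⟨hx, hax⟩ | rfl)
        · by_contra hxu
          push_neg at hxu
          exact absurd (hW hu hx hxu) (not_lt.2 (hwa.trans hax))
        · exact hu.1.le
      exact h2 (le_antisymm hua hle)
    · by_contra hbw
      push_neg at hbw
      exact absurd (le_csSup (hbdd b) (Or.inl ⟨hu, hbw.le⟩)) (not_le.2 hbu)

lemma pieceInv_iff {W : ℝ → ℝ} {δ : ℕ → ℝ} {I : Finset ℕ} {k : ℕ} {a b u : ℝ}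
    (hinc : k ∈ I → StrictMonoOn W (Set.Ioc (δ (k - 1)) (δ k)))
    (hdec : k ∉ I → StrictAntiOn W (Set.Ioc (δ (k - 1)) (δ k)))
    (hu : u ∈ Set.Ioc (δ (k - 1)) (δ k))
    (h1 : u ≠ pieceInv W δ I k (if k ∈ I then a else b))
    (h2 : u ≠ pieceInv W δ I k (if k ∈ I then b else a)) :
    (a < W u ∧ W u ≤ b) ↔ u ∈ Set.Ioc (pieceInv W δ I k (if k ∈ I then a else b))
      (pieceInv W δ I k (if k ∈ I then b else a)) := by
  by_cases hk : k ∈ I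
  · simp only [pieceInv, if_pos hk] at h1 h2 ⊢
    rw [Set.mem_Ioc]
    exact inc_iff (hinc hk) hu h1 h2
  · simp only [pieceInv, if_neg hk] at h1 h2 ⊢
    rw [Set.mem_Ioc]
    exact dec_iff (hdec hk) hu h1 h2

lemma pieceInv_mem {W : ℝ → ℝ} {δ : ℕ → ℝ} {I : Finset ℕ} {k : ℕ}
    (h : δ (k - 1) ≤ δ k) (v : ℝ) :
    pieceInv W δ I k v ∈ Set.Icc (δ (k - 1)) (δ k) := by
  unfold pieceInv
  split
  · exact locInvI_mem h v
  · exact locInvD_mem h v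

lemma mem_piece {W : ℝ → ℝ} {δ : ℕ → ℝ} {I : Finset ℕ} {k : ℕ} {v1 v2 u : ℝ}
    (h : δ (k - 1) ≤ δ k)
    (hu : u ∈ Set.Ioc (pieceInv W δ I k v1) (pieceInv W δ I k v2)) :
    u ∈ Set.Ioc (δ (k - 1)) (δ k) :=
  ⟨lt_of_le_of_lt (pieceInv_mem h v1).1 hu.1, hu.2.trans (pieceInv_mem h v2).2⟩

lemma delta_mono {K : ℕ} {δ : ℕ → ℝ} (hδ : ∀ k, k < K → δ k < δ (k + 1)) :
    ∀ m n, m ≤ n → n ≤ K → δ m ≤ δ n := by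
  intro m n
  induction n with
  | zero => intro h _; simp [Nat.le_zero.1 h]
  | succ n ih =>
    intro hmn hnK
    rcases Nat.eq_or_lt_of_le hmn with rfl | h
    · exact le_rfl
    · exact (ih (by omega) (by omega)).trans (hδ n (by omega)).le

lemma exists_piece {K : ℕ} {δ : ℕ → ℝ} (hK : 1 ≤ K) (hδ0 : δ 0 = 0) (hδK : δ K = 1)
    {u : ℝ} (hu : u ∈ Set.Ioc (0 : ℝ) 1) :
    ∃ k, 1 ≤ k ∧ k ≤ K ∧ u ∈ Set.Ioc (δ (k - 1)) (δ k) := by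
  classical
  have hP : u ≤ δ K := hδK ▸ hu.2
  have hex : ∃ k, u ≤ δ k := ⟨K, hP⟩
  set k0 := Nat.find hex with hk0
  have hspec : u ≤ δ k0 := Nat.find_spec hex
  have hk0K : k0 ≤ K := Nat.find_le hP
  have hk01 : 1 ≤ k0 := by
    by_contra h
    push_neg at h
    interval_cases k0
    · rw [hδ0] at hspec
      exact absurd hspec (not_le.2 hu.1)
  have hmin : ¬ u ≤ δ (k0 - 1) := Nat.find_min hex (by omega)
  exact ⟨k0, hk01, hk0K, ⟨not_le.1 hmin, hspec⟩⟩

lemma pieces_disjoint {K : ℕ} {δ : ℕ → ℝ} (hδ : ∀ k, k < K → δ k < δ (k + 1))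
    {k1 k2 : ℕ} (h11 : 1 ≤ k1) (h1K : k1 ≤ K) (h21 : 1 ≤ k2) (h2K : k2 ≤ K)
    (hne : k1 ≠ k2) {u : ℝ}
    (hu1 : u ∈ Set.Ioc (δ (k1 - 1)) (δ k1)) (hu2 : u ∈ Set.Ioc (δ (k2 - 1)) (δ k2)) :
    False := by
  rcases Nat.lt_or_ge k1 k2 with h | h
  · have := delta_mono hδ k1 (k2 - 1) (by omega) (by omega)
    have := hu1.2
    have := hu2.1
    linarith
  · have hlt : k2 < k1 := by omega
    have := delta_mono hδ k2 (k1 - 1) (by omega) (by omega)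
    have := hu2.2
    have := hu1.1
    linarith

lemma null_of_unif {Ω : Type*} [MeasurableSpace Ω] (P : Measure Ω) (U : Ω → ℝ)
    (hU : Measurable U) (hlaw : P.map U = unif01) {s : Set ℝ} (hs : MeasurableSet s)
    (h0 : volume (s ∩ Set.Ioc (0 : ℝ) 1) = 0) : P (U ⁻¹' s) = 0 := by
  have h := Measure.map_apply hU hs (μ := P)
  rw [hlaw] at h
  rw [← h]
  rw [unif01, Measure.restrict_apply hs]
  exact h0

end WTaux

open WTaux in
theorem w_transformed_copula_volume
    (d : ℕ)
    {Ω : Type*} [MeasurableSpace Ω] (P : Measure Ω) [IsProbabilityMeasure P]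
    (U : Fin d → Ω → ℝ) (hU : ∀ j, Measurable (U j))
    (hUlaw : ∀ j, P.map (U j) = unif01)
    (W : Fin d → ℝ → ℝ) (hWmeas : ∀ j, Measurable (W j))
    (hWunif : ∀ j, Measure.map (W j) unif01 = unif01)
    (K : Fin d → ℕ) (hK : ∀ j, 1 ≤ K j)
    (δ : Fin d → ℕ → ℝ)
    (hδ0 : ∀ j, δ j 0 = 0) (hδK : ∀ j, δ j (K j) = 1)
    (hδ : ∀ j, ∀ k : ℕ, k < K j → δ j k < δ j (k + 1))
    (I : Fin d → Finset ℕ) (hI : ∀ j, I j ⊆ Finset.Icc 1 (K j))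
    (hmono : ∀ j, ∀ k ∈ Finset.Icc 1 (K j),
      (k ∈ I j → StrictMonoOn (W j) (Set.Ioc (δ j (k - 1)) (δ j k))) ∧
      (k ∉ I j → StrictAntiOn (W j) (Set.Ioc (δ j (k - 1)) (δ j k)))) :
    ∀ a b : Fin d → ℝ, (∀ j, 0 ≤ a j) → (∀ j, a j ≤ b j) → (∀ j, b j ≤ 1) →
      (P {ω | ∀ j, a j < W j (U j ω) ∧ W j (U j ω) ≤ b j}).toReal
        = ∑ k ∈ Fintype.piFinset (fun j => Finset.Icc 1 (K j)),
            (P {ω | ∀ j, U j ω ∈ Set.Ioc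
                (pieceInv (W j) (δ j) (I j) (k j) (if k j ∈ I j then a j else b j))
                (pieceInv (W j) (δ j) (I j) (k j) (if k j ∈ I j then b j else a j))}).toReal := by
  classical
  intro a b ha hab hb
  -- abbreviations
  have hcd : ∀ j, ∀ k, 1 ≤ k → k ≤ K j → δ j (k - 1) < δ j k := by
    intro j k h1 h2
    have h := hδ j (k - 1) (by omega)
    rwa [Nat.sub_add_cancel h1] at h
  set S : (Fin d → ℕ) → Set Ω := fun k => {ω | ∀ j, U j ω ∈ Set.Ioc
      (pieceInv (W j) (δ j) (I j) (k j) (if k j ∈ I j then a j else b j))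
      (pieceInv (W j) (δ j) (I j) (k j) (if k j ∈ I j then b j else a j))} with hSdef
  set Good : Set Ω := {ω | ∀ j, U j ω ∈ Set.Ioc (0 : ℝ) 1 ∧
      ∀ k, 1 ≤ k → k ≤ K j →
        U j ω ≠ pieceInv (W j) (δ j) (I j) k (if k ∈ I j then a j else b j) ∧
        U j ω ≠ pieceInv (W j) (δ j) (I j) k (if k ∈ I j then b j else a j)}
    with hGdef
  -- Good has full measure
  have hGood : P Goodᶜ = 0 := by
    have hsub : Goodᶜ ⊆ ⋃ j, ((U j ⁻¹' (Set.Ioc (0 : ℝ) 1)ᶜ) ∪ ⋃ (k : ℕ),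
        ((U j ⁻¹' {pieceInv (W j) (δ j) (I j) k (if k ∈ I j then a j else b j)}) ∪
         (U j ⁻¹' {pieceInv (W j) (δ j) (I j) k (if k ∈ I j then b j else a j)}))) := by
      intro ω hω
      rw [hGdef] at hω
      simp only [mem_compl_iff, mem_setOf_eq, not_forall] at hω
      obtain ⟨j, hj⟩ := hω
      refine mem_iUnion.2 ⟨j, ?_⟩
      by_cases hmem : U j ω ∈ Set.Ioc (0 : ℝ) 1
      · right
        push_neg at hj
        obtain ⟨k, _, _, hk⟩ := hj hmem
        refine mem_iUnion.2 ⟨k, ?_⟩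
        by_cases he : U j ω = pieceInv (W j) (δ j) (I j) k (if k ∈ I j then a j else b j)
        · exact Or.inl he
        · exact Or.inr (hk he)
      · exact Or.inl hmem
    refine measure_mono_null hsub (measure_iUnion_null fun j => measure_union_null ?_
      (measure_iUnion_null fun k => measure_union_null ?_ ?_))
    · exact null_of_unif P (U j) (hU j) (hUlaw j) measurableSet_Ioc.compl
        (by simp)
    · exact null_of_unif P (U j) (hU j) (hUlaw j) (measurableSet_singleton _)
        (measure_mono_null inter_subset_left Real.volume_singleton)
    · exact null_of_unif P (U j) (hU j) (hUlaw j) (measurableSet_singleton _)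
        (measure_mono_null inter_subset_left Real.volume_singleton)
  -- pointwise identification on Good
  have hiff : ∀ ω ∈ Good, ((∀ j, a j < W j (U j ω) ∧ W j (U j ω) ≤ b j) ↔
      ∃ k ∈ Fintype.piFinset (fun j => Finset.Icc 1 (K j)), ω ∈ S k) := by
    intro ω hω
    rw [hGdef] at hω
    simp only [mem_setOf_eq] at hω
    constructor
    · intro h
      have hch : ∀ j, ∃ k, (1 ≤ k ∧ k ≤ K j) ∧ U j ω ∈ Set.Ioc
          (pieceInv (W j) (δ j) (I j) k (if k ∈ I j then a j else b j))
          (pieceInv (W j) (δ j) (I j) k (if k ∈ I j then b j else a j)) := by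
        intro j
        obtain ⟨k, hk1, hk2, hkmem⟩ :=
          exists_piece (hK j) (hδ0 j) (hδK j) (hω j).1
        have hkI : k ∈ Finset.Icc 1 (K j) := Finset.mem_Icc.2 ⟨hk1, hk2⟩
        have hexc := (hω j).2 k hk1 hk2
        exact ⟨k, ⟨hk1, hk2⟩,
          (pieceInv_iff (hmono j k hkI).1 (hmono j k hkI).2 hkmem hexc.1 hexc.2).1 (h j)⟩
      choose k hk1 hk2 using hch
      exact ⟨k, Fintype.mem_piFinset.2 fun j => Finset.mem_Icc.2 (hk1 j), fun j => hk2 j⟩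
    · rintro ⟨k, hkpf, hSk⟩
      intro j
      have hkI : k j ∈ Finset.Icc 1 (K j) := Fintype.mem_piFinset.1 hkpf j
      have hk1 := (Finset.mem_Icc.1 hkI).1
      have hk2 := (Finset.mem_Icc.1 hkI).2
      have hpc : U j ω ∈ Set.Ioc (δ j (k j - 1)) (δ j (k j)) :=
        mem_piece (hcd j (k j) hk1 hk2).le (hSk j)
      have hexc := (hω j).2 (k j) hk1 hk2
      exact (pieceInv_iff (hmono j (k j) hkI).1 (hmono j (k j) hkI).2 hpc
        hexc.1 hexc.2).2 (hSk j)
  -- translate to sets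
  have hset : {ω | ∀ j, a j < W j (U j ω) ∧ W j (U j ω) ≤ b j} ∩ Good =
      (⋃ k ∈ Fintype.piFinset (fun j => Finset.Icc 1 (K j)), S k) ∩ Good := by
    ext ω
    simp only [mem_inter_iff, mem_setOf_eq, mem_iUnion, exists_prop, and_congr_left_iff]
    intro hg
    exact hiff ω hg
  -- disjointness
  have hdisj : (↑(Fintype.piFinset (fun j => Finset.Icc 1 (K j))) :
      Set (Fin d → ℕ)).PairwiseDisjoint S := by
    intro k hk k' hk' hne
    rw [Finset.mem_coe, Fintype.mem_piFinset] at hk hk'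
    obtain ⟨j, hj⟩ := Function.ne_iff.1 hne
    refine Set.disjoint_left.2 fun ω hω hω' => ?_
    have h1 := Finset.mem_Icc.1 (hk j)
    have h2 := Finset.mem_Icc.1 (hk' j)
    exact pieces_disjoint (hδ j) h1.1 h1.2 h2.1 h2.2 hj
      (mem_piece (hcd j (k j) h1.1 h1.2).le (hω j))
      (mem_piece (hcd j (k' j) h2.1 h2.2).le (hω' j))
  -- measurability
  have hSmeas : ∀ k, MeasurableSet (S k) := by
    intro k
    have : S k = ⋂ j, U j ⁻¹' Set.Ioc
        (pieceInv (W j) (δ j) (I j) (k j) (if k j ∈ I j then a j else b j))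
        (pieceInv (W j) (δ j) (I j) (k j) (if k j ∈ I j then b j else a j)) := by
      ext ω; simp [hSdef, Set.mem_iInter]
    rw [this]
    exact MeasurableSet.iInter fun j => (hU j) measurableSet_Ioc
  -- put it together
  have hmain : P {ω | ∀ j, a j < W j (U j ω) ∧ W j (U j ω) ≤ b j}
      = ∑ k ∈ Fintype.piFinset (fun j => Finset.Icc 1 (K j)), P (S k) := by
    rw [← measure_inter_conull hGood, hset, measure_inter_conull hGood]
    exact measure_biUnion_finset hdisj fun k _ => hSmeas k
  rw [hmain]
  exact ENNReal.toReal_sum fun k _ => measure_ne_top P _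
end

section
/- Let C be a bivariate copula (joint distribution function of (U_1, U_2) with U(0,1) margins) whose lower tail copula Λ(x, y; C) = lim_{p→0+} C(px, py)/p exists for all x, y ≥ 0 and whose maximal tail concordance measure sup_{b>0} Λ(b, 1/b; C) is attained at a unique b* ∈ (0,∞). Suppose C is tail independent in the upper-left, upper, and lower-right tails, i.e., for all x, y > 0: lim_{p→0+} (py − C(1 − px, py))/p = 0, lim_{p→0+} (1 − (1 − px) − (1 − py) + C(1 − px, 1 − py))/p = 0, and lim_{p→0+} (px − C(px, 1 − py))/p = 0. For j = 1, 2 let 𝒱*_j = 1 − 𝒱_j be a flipped v-transform, where 𝒱_j is a v-transform with change point δ_j, and suppose α_j = (𝒱*_{j|1})^{−1}ʹ(0+) = (𝒱_{j|1}^{−1})ʹ(1−) exists, α_j ∈ [0,1]. Let C_{𝒱*} be the joint distribution function of (𝒱*_1(U_1), 𝒱*_2(U_2)). Then Λ(b, 1/b; C_{𝒱*}) = Λ(α_1 b, α_2/b; C) for all b > 0, and if α_1, α_2 > 0, the maximal tail concordance measure of C_{𝒱*} is attained at b*_{C_{𝒱*}} = √(α_2/α_1) · b* with value Λ(b*_{C_{𝒱*}},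 1/b*_{C_{𝒱*}}; C_{𝒱*}) = √(α_1 α_2) · Λ(b*, 1/b*; C). -/
/-!
For `t ∈ [0, 1]`, up to a null set the event `{1 - 𝒱(U) ≤ t}` is
`{U ≤ 𝒱_{|1}⁻¹(1 - t)} ∪ {U ≥ w}` with `𝒱(w) = 1 - t` on the increasing branch, and since `𝒱`
preserves `U(0,1)` both pieces have mass at most `t`. Hence `C_{𝒱*}(s, t)` lies between
`C(𝒱_{1|1}⁻¹(1 - s), 𝒱_{2|1}⁻¹(1 - t))` and that value plus the masses of three corners of the
unit square away from the origin, which are `o(p)` at `(s, t) = (pb, p/b)` by tail independence.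
As `C` is `1`-Lipschitz in each argument and `𝒱_{j|1}⁻¹(1 - pk) / p → α_j k`, the tail copula of
`C_{𝒱*}` at `(b, 1/b)` is `Λ(α₁b, α₂/b)`. By homogeneity of `Λ` this equals
`√(α₁α₂) Λ(b', 1/b')` with `b' = √(α₁/α₂) b`, so the maximisation reduces to that of `C`.
-/

open MeasureTheory Set Filter

open Topology

instance : IsProbabilityMeasure unif01 := ⟨by simp [unif01]⟩

instance : NullSingletonClass unif01 := by unfold unif01; infer_instance

lemma ae_mem_Ioc_unif01 : ∀ᵐ u ∂unif01, u ∈ Ioc (0 : ℝ) 1 :=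
  ae_restrict_mem measurableSet_Ioc

lemma unif01_real_Ioc_le {x y : ℝ} (h : x ≤ y) : unif01.real (Ioc x y) ≤ y - x := by
  rw [unif01, measureReal_restrict_apply measurableSet_Ioc]
  calc volume.real (Ioc x y ∩ Ioc 0 1) ≤ volume.real (Ioc x y) :=
        measureReal_mono inter_subset_left measure_Ioc_lt_top.ne
    _ = y - x := by rw [Real.volume_real_Ioc, max_eq_left (sub_nonneg.2 h)]

lemma unif01_real_Iic {t : ℝ} (ht : t ∈ Icc (0 : ℝ) 1) : unif01.real (Iic t) = t := by
  rw [unif01, measureReal_restrict_apply measurableSet_Iic, Iic_inter_Ioc_of_le ht.2,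
    Real.volume_real_Ioc, sub_zero, max_eq_left ht.1]

lemma unif01_real_Iio {t : ℝ} (ht : t ∈ Icc (0 : ℝ) 1) : unif01.real (Iio t) = t := by
  rw [measureReal_congr Iio_ae_eq_Iic, unif01_real_Iic ht]

lemma unif01_real_Ici {t : ℝ} (ht : t ∈ Icc (0 : ℝ) 1) : unif01.real (Ici t) = 1 - t := by
  rw [← compl_Iio, probReal_compl_eq_one_sub measurableSet_Iio, unif01_real_Iio ht]

lemma MeasureTheory.Measure.QuasiMeasurePreserving.preimage_Iio_ae_eq {Ω α : Type*}
    [MeasurableSpace Ω] [MeasurableSpace α] [PartialOrder α] {P : Measure Ω} {ν : Measure α}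
    [NullSingletonClass ν] {X : Ω → α} (hX : Measure.QuasiMeasurePreserving X P ν) (c : α) :
    X ⁻¹' Iio c =ᵐ[P] X ⁻¹' Iic c :=
  hX.preimage_ae_eq Iio_ae_eq_Iic

section JointCDF

variable {Ω : Type*} [MeasurableSpace Ω] {P : Measure Ω} {X Y : Ω → ℝ}

/-- With `U(0,1)` margins this is the copula of `(X, Y)`. -/
noncomputable def jointCDF (P : Measure Ω) (X Y : Ω → ℝ) (x y : ℝ) : ℝ :=
  P.real (X ⁻¹' Iic x ∩ Y ⁻¹' Iic y)

lemma jointCDF_comm (x y : ℝ) : jointCDF P X Y x y = jointCDF P Y X y x := by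
  rw [jointCDF, jointCDF, inter_comm]

variable [IsProbabilityMeasure P]

lemma abs_jointCDF_sub_jointCDF_left_le (hX : MeasurePreserving X P unif01) (x x' y : ℝ) :
    |jointCDF P X Y x y - jointCDF P X Y x' y| ≤ |x - x'| := by
  wlog h : x ≤ x' generalizing x x'
  · rw [abs_sub_comm, abs_sub_comm x]; exact this x' x (le_of_not_ge h)
  have hmono : jointCDF P X Y x y ≤ jointCDF P X Y x' y :=
    measureReal_mono (inter_subset_inter_left _ (preimage_mono (Iic_subset_Iic.2 h)))
  have hstep : jointCDF P X Y x' y ≤ jointCDF P X Y x y + (x' - x) :=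
    calc jointCDF P X Y x' y
        ≤ P.real ((X ⁻¹' Iic x ∩ Y ⁻¹' Iic y) ∪ X ⁻¹' Ioc x x') := by
          refine measureReal_mono fun ω ⟨hx', hy⟩ => ?_
          rcases le_or_gt (X ω) x with hx | hx
          exacts [Or.inl ⟨hx, hy⟩, Or.inr ⟨hx, hx'⟩]
      _ ≤ jointCDF P X Y x y + P.real (X ⁻¹' Ioc x x') := measureReal_union_le _ _
      _ ≤ jointCDF P X Y x y + (x' - x) := by
          rw [hX.measureReal_preimage measurableSet_Ioc.nullMeasurableSet]
          gcongr
          exact unif01_real_Ioc_le h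
  rw [abs_sub_comm, abs_of_nonneg (sub_nonneg.2 hmono), abs_sub_comm,
    abs_of_nonneg (sub_nonneg.2 h)]
  linarith

lemma abs_jointCDF_sub_jointCDF_le (hX : MeasurePreserving X P unif01)
    (hY : MeasurePreserving Y P unif01) (x x' y y' : ℝ) :
    |jointCDF P X Y x y - jointCDF P X Y x' y'| ≤ |x - x'| + |y - y'| :=
  calc |jointCDF P X Y x y - jointCDF P X Y x' y'|
      ≤ |jointCDF P X Y x y - jointCDF P X Y x' y| +
          |jointCDF P X Y x' y - jointCDF P X Y x' y'| := abs_sub_le _ _ _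
    _ ≤ |x - x'| + |y - y'| := by
        have hy := abs_jointCDF_sub_jointCDF_left_le (Y := X) hY y y' x'
        simp only [jointCDF_comm (X := Y) (Y := X)] at hy
        exact add_le_add (abs_jointCDF_sub_jointCDF_left_le hX x x' y) hy

lemma measureReal_preimage_Iic_inter_preimage_Ici (hX : MeasurePreserving X P unif01)
    (hY : MeasurePreserving Y P unif01) {s : ℝ} (hs : s ∈ Icc (0 : ℝ) 1) (c : ℝ) :
    P.real (X ⁻¹' Iic s ∩ Y ⁻¹' Ici c) = s - jointCDF P X Y s c := by
  have hsplit := measureReal_inter_add_sdiff (μ := P) (s := X ⁻¹' Iic s)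
    (hY.measurable (measurableSet_Iio (a := c)))
  rw [sdiff_eq, ← preimage_compl, compl_Iio,
    hX.measureReal_preimage measurableSet_Iic.nullMeasurableSet, unif01_real_Iic hs,
    measureReal_congr ((ae_eq_refl _).inter
      (hY.quasiMeasurePreserving.preimage_Iio_ae_eq c))] at hsplit
  rw [jointCDF]
  linarith

lemma measureReal_preimage_Ici_inter_preimage_Iic (hX : MeasurePreserving X P unif01)
    (hY : MeasurePreserving Y P unif01) (c : ℝ) {t : ℝ} (ht : t ∈ Icc (0 : ℝ) 1) :
    P.real (X ⁻¹' Ici c ∩ Y ⁻¹' Iic t) = t - jointCDF P X Y c t := by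
  rw [inter_comm, measureReal_preimage_Iic_inter_preimage_Ici hY hX ht, jointCDF_comm]

lemma measureReal_preimage_Ici_inter_preimage_Ici (hX : MeasurePreserving X P unif01)
    (hY : MeasurePreserving Y P unif01) {c₀ c₁ : ℝ} (hc₀ : c₀ ∈ Icc (0 : ℝ) 1)
    (hc₁ : c₁ ∈ Icc (0 : ℝ) 1) :
    P.real (X ⁻¹' Ici c₀ ∩ Y ⁻¹' Ici c₁) = 1 - c₀ - c₁ + jointCDF P X Y c₀ c₁ := by
  have hXc : P.real (X ⁻¹' Iio c₀) = c₀ := by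
    rw [hX.measureReal_preimage measurableSet_Iio.nullMeasurableSet, unif01_real_Iio hc₀]
  have hYc : P.real (Y ⁻¹' Iio c₁) = c₁ := by
    rw [hY.measureReal_preimage measurableSet_Iio.nullMeasurableSet, unif01_real_Iio hc₁]
  have hinter : P.real (X ⁻¹' Iio c₀ ∩ Y ⁻¹' Iio c₁) = jointCDF P X Y c₀ c₁ :=
    measureReal_congr ((hX.quasiMeasurePreserving.preimage_Iio_ae_eq c₀).inter
      (hY.quasiMeasurePreserving.preimage_Iio_ae_eq c₁))
  have hunion := measureReal_union_add_inter (μ := P) (s := X ⁻¹' Iio c₀)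
    (hY.measurable (measurableSet_Iio (a := c₁)))
  rw [← compl_Iio, ← compl_Iio, preimage_compl, preimage_compl, ← compl_union,
    probReal_compl_eq_one_sub
      ((hX.measurable measurableSet_Iio).union (hY.measurable measurableSet_Iio))]
  linarith

end JointCDF

lemma tendsto_mul_const_nhdsGT_zero {c : ℝ} (hc : 0 < c) :
    Tendsto (· * c) (𝓝[>] (0 : ℝ)) (𝓝[>] 0) := by
  refine tendsto_nhdsWithin_of_tendsto_nhds_of_eventually_within _ ?_
    (eventually_nhdsWithin_of_forall fun p hp => mul_pos hp hc)
  simpa using (continuous_mul_const c).tendsto' 0 0 (zero_mul c) |>.mono_left nhdsWithin_le_nhds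

lemma Filter.Tendsto.comp_mul_div {g : ℝ → ℝ} {L : ℝ}
    (hg : Tendsto (fun p => g p / p) (𝓝[>] 0) (𝓝 L)) {c : ℝ} (hc : 0 < c) :
    Tendsto (fun p => g (p * c) / p) (𝓝[>] 0) (𝓝 (L * c)) := by
  refine ((hg.comp (tendsto_mul_const_nhdsGT_zero hc)).mul_const c).congr' ?_
  filter_upwards [self_mem_nhdsWithin] with p (hp : 0 < p)
  simp only [Function.comp_apply]
  field_simp

lemma tendsto_div_of_hasDerivWithinAt {f : ℝ → ℝ} {a : ℝ}
    (hf : HasDerivWithinAt f a (Ioi 0) 0) (h0 : f 0 = 0) :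
    Tendsto (fun v => f v / v) (𝓝[>] 0) (𝓝 a) := by
  rw [hasDerivWithinAt_iff_tendsto_slope' self_notMem_Ioi] at hf
  refine hf.congr fun v => ?_
  rw [slope_def_field, h0, sub_zero, sub_zero]

lemma tendsto_div_of_abs_sub_le {F : ℝ → ℝ → ℝ}
    (hF : ∀ x x' y y', |F x y - F x' y'| ≤ |x - x'| + |y - y'|) {f g : ℝ → ℝ} {x y L : ℝ}
    (hL : Tendsto (fun p => F (p * x) (p * y) / p) (𝓝[>] 0) (𝓝 L))
    (hf : Tendsto (fun p => f p / p) (𝓝[>] 0) (𝓝 x))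
    (hg : Tendsto (fun p => g p / p) (𝓝[>] 0) (𝓝 y)) :
    Tendsto (fun p => F (f p) (g p) / p) (𝓝[>] 0) (𝓝 L) := by
  have hdiff :
      Tendsto (fun p => F (f p) (g p) / p - F (p * x) (p * y) / p) (𝓝[>] 0) (𝓝 0) := by
    refine squeeze_zero_norm' ?_ (by simpa using (hf.sub_const x).abs.add (hg.sub_const y).abs)
    filter_upwards [self_mem_nhdsWithin] with p (hp : 0 < p)
    calc ‖F (f p) (g p) / p - F (p * x) (p * y) / p‖
        = |F (f p) (g p) - F (p * x) (p * y)| / p := by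
          rw [Real.norm_eq_abs, ← sub_div, abs_div, abs_of_pos hp]
      _ ≤ (|f p - p * x| + |g p - p * y|) / p := by gcongr; exact hF _ _ _ _
      _ = |f p / p - x| + |g p / p - y| := by
          rw [add_div, ← abs_of_pos hp, ← abs_div, ← abs_div, abs_of_pos hp, sub_div, sub_div,
            mul_div_cancel_left₀ _ hp.ne', mul_div_cancel_left₀ _ hp.ne']
  simpa using hL.add hdiff

lemma tailLimit_mul_mul {F Λ : ℝ → ℝ → ℝ}
    (hΛ : ∀ x y : ℝ, 0 ≤ x → 0 ≤ y →
      Tendsto (fun p => F (p * x) (p * y) / p) (𝓝[>] 0) (𝓝 (Λ x y)))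
    {c x y : ℝ} (hc : 0 < c) (hx : 0 ≤ x) (hy : 0 ≤ y) : Λ (c * x) (c * y) = c * Λ x y := by
  have h := (hΛ x y hx hy).comp_mul_div (g := fun p => F (p * x) (p * y)) hc
  simp only [mul_assoc] at h
  rw [mul_comm c (Λ x y)]
  exact tendsto_nhds_unique (hΛ _ _ (by positivity) (by positivity)) h

structure IsVTransform (V : ℝ → ℝ) (δ : ℝ) : Prop where
  fulcrum_mem : δ ∈ Ioo (0 : ℝ) 1
  measurePreserving : MeasurePreserving V unif01 unif01
  continuousOn : ContinuousOn V (Icc 0 1)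
  strictAntiOn : StrictAntiOn V (Icc 0 δ)
  strictMonoOn : StrictMonoOn V (Icc δ 1)
  map_zero : V 0 = 1
  map_fulcrum : V δ = 0
  map_one : V 1 = 1

namespace IsVTransform

variable {V Vinv : ℝ → ℝ} {δ : ℝ} (hV : IsVTransform V δ)
  (hVinv : ∀ v ∈ Icc (0 : ℝ) 1, Vinv v ∈ Icc 0 δ ∧ V (Vinv v) = v)
include hV

lemma le_apply_iff {a w s u : ℝ} (ha : a ∈ Icc 0 δ) (hw : w ∈ Icc δ 1) (hVa : V a = s)
    (hVw : V w = s) (hu : u ∈ Icc (0 : ℝ) 1) : s ≤ V u ↔ u ≤ a ∨ w ≤ u := by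
  constructor
  · intro h
    rcases le_total u δ with huδ | hδu
    · exact Or.inl ((hV.strictAntiOn.le_iff_ge ha ⟨hu.1, huδ⟩).1 (hVa ▸ h))
    · exact Or.inr ((hV.strictMonoOn.le_iff_le hw ⟨hδu, hu.2⟩).1 (hVw ▸ h))
  · rintro (hua | hwu)
    · exact hVa ▸ hV.strictAntiOn.antitoneOn ⟨hu.1, hua.trans ha.2⟩ ha hua
    · exact hVw ▸ hV.strictMonoOn.monotoneOn hw ⟨hw.1.trans hwu, hu.2⟩ hwu

lemma exists_mem_Icc_apply_eq {s : ℝ} (hs : s ∈ Icc (0 : ℝ) 1) : ∃ w ∈ Icc δ 1, V w = s := by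
  refine intermediate_value_Icc hV.fulcrum_mem.2.le
    (hV.continuousOn.mono (Icc_subset_Icc hV.fulcrum_mem.1.le le_rfl)) ?_
  rwa [hV.map_fulcrum, hV.map_one]

lemma unif01_real_le {t : ℝ} (ht : t ∈ Icc (0 : ℝ) 1) {S : Set ℝ}
    (hS : ∀ u ∈ S ∩ Ioc 0 1, 1 - t ≤ V u) : unif01.real S ≤ t :=
  calc unif01.real S ≤ unif01.real (V ⁻¹' Ici (1 - t)) := by
        refine ENNReal.toReal_mono (measure_ne_top _ _) (measure_mono_ae ?_)
        filter_upwards [ae_mem_Ioc_unif01] with u hu huS using hS u ⟨huS, hu⟩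
    _ = t := by
        rw [hV.measurePreserving.measureReal_preimage measurableSet_Ici.nullMeasurableSet,
          unif01_real_Ici ⟨by linarith [ht.2], by linarith [ht.1]⟩, sub_sub_cancel]

include hVinv

lemma exists_one_sub_apply_le_iff {t : ℝ} (ht : t ∈ Icc (0 : ℝ) 1) :
    ∃ w, 1 - w ≤ t ∧ ∀ u ∈ Icc (0 : ℝ) 1, 1 - V u ≤ t ↔ u ≤ Vinv (1 - t) ∨ w ≤ u := by
  have hs : 1 - t ∈ Icc (0 : ℝ) 1 := ⟨by linarith [ht.2], by linarith [ht.1]⟩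
  obtain ⟨ha, hVa⟩ := hVinv _ hs
  obtain ⟨w, hw, hVw⟩ := hV.exists_mem_Icc_apply_eq hs
  have hiff (u : ℝ) (hu : u ∈ Icc (0 : ℝ) 1) : 1 - V u ≤ t ↔ u ≤ Vinv (1 - t) ∨ w ≤ u := by
    rw [sub_le_comm]; exact hV.le_apply_iff ha hw hVa hVw hu
  refine ⟨w, ?_, hiff⟩
  have hbound := hV.unif01_real_le ht (S := Ici w) fun u hu =>
    sub_le_comm.1 ((hiff u (Ioc_subset_Icc_self hu.2)).2 (Or.inr hu.1))
  rwa [unif01_real_Ici ⟨hV.fulcrum_mem.1.le.trans hw.1, hw.2⟩] at hbound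

lemma inv_one_sub_le {t : ℝ} (ht : t ∈ Icc (0 : ℝ) 1) : Vinv (1 - t) ≤ t := by
  obtain ⟨w, -, hiff⟩ := hV.exists_one_sub_apply_le_iff hVinv ht
  have ha := (hVinv (1 - t) ⟨by linarith [ht.2], by linarith [ht.1]⟩).1
  have hbound := hV.unif01_real_le ht (S := Iic (Vinv (1 - t))) fun u hu =>
    sub_le_comm.1 ((hiff u (Ioc_subset_Icc_self hu.2)).2 (Or.inl hu.1))
  rwa [unif01_real_Iic ⟨ha.1, ha.2.trans hV.fulcrum_mem.2.le⟩] at hbound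

lemma exists_preimage_one_sub_ae_eq {Ω : Type*} [MeasurableSpace Ω] {P : Measure Ω}
    {X : Ω → ℝ} (hX : MeasurePreserving X P unif01) {t : ℝ} (ht : t ∈ Icc (0 : ℝ) 1) :
    ∃ w, 1 - w ≤ t ∧ (fun ω => 1 - V (X ω)) ⁻¹' Iic t =ᵐ[P]
      (X ⁻¹' Iic (Vinv (1 - t)) ∪ X ⁻¹' Ici w : Set Ω) := by
  obtain ⟨w, hw, hiff⟩ := hV.exists_one_sub_apply_le_iff hVinv ht
  refine ⟨w, hw, ?_⟩
  filter_upwards [hX.quasiMeasurePreserving.ae ae_mem_Ioc_unif01] with ω hω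
  exact propext (hiff _ (Ioc_subset_Icc_self hω))

lemma inv_one : Vinv 1 = 0 := by
  obtain ⟨ha, hVa⟩ := hVinv 1 ⟨zero_le_one, le_rfl⟩
  refine hV.strictAntiOn.injOn ha ⟨le_rfl, hV.fulcrum_mem.1.le⟩ ?_
  rw [hVa, hV.map_zero]

variable {α : ℝ} (hα : HasDerivWithinAt (fun v => Vinv (1 - v)) α (Ioi 0) 0)
include hα

lemma tendsto_inv_one_sub_div : Tendsto (fun v => Vinv (1 - v) / v) (𝓝[>] 0) (𝓝 α) :=
  tendsto_div_of_hasDerivWithinAt hα (by simpa using hV.inv_one hVinv)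

lemma tendsto_inv_one_sub_mul_div {k : ℝ} (hk : 0 < k) :
    Tendsto (fun p => Vinv (1 - p * k) / p) (𝓝[>] 0) (𝓝 (α * k)) :=
  (hV.tendsto_inv_one_sub_div hVinv hα).comp_mul_div (g := fun v => Vinv (1 - v)) hk

lemma nonneg_of_hasDerivWithinAt : 0 ≤ α := by
  refine ge_of_tendsto (hV.tendsto_inv_one_sub_div hVinv hα) ?_
  filter_upwards [Ioc_mem_nhdsGT zero_lt_one] with v hv
  exact div_nonneg (hVinv _ ⟨by linarith [hv.2], by linarith [hv.1]⟩).1.1 hv.1.le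

end IsVTransform

section Flipped

variable {Ω : Type*} [MeasurableSpace Ω] {P : Measure Ω} [IsProbabilityMeasure P]
  {X Y : Ω → ℝ} {V₀ V₁ Vinv₀ Vinv₁ : ℝ → ℝ} {δ₀ δ₁ : ℝ}
  (hX : MeasurePreserving X P unif01) (hY : MeasurePreserving Y P unif01)
  (hV₀ : IsVTransform V₀ δ₀) (hV₁ : IsVTransform V₁ δ₁)
  (hVinv₀ : ∀ v ∈ Icc (0 : ℝ) 1, Vinv₀ v ∈ Icc 0 δ₀ ∧ V₀ (Vinv₀ v) = v)
  (hVinv₁ : ∀ v ∈ Icc (0 : ℝ) 1, Vinv₁ v ∈ Icc 0 δ₁ ∧ V₁ (Vinv₁ v) = v)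
include hX hY hV₀ hV₁ hVinv₀ hVinv₁

/-- The three bracketed terms are the masses of the corners `{X ≤ s, Y ≥ 1 - t}`,
`{X ≥ 1 - s, Y ≤ t}` and `{X ≥ 1 - s, Y ≥ 1 - t}`. -/
lemma jointCDF_flip_bounds {s t : ℝ} (hs : s ∈ Icc (0 : ℝ) 1) (ht : t ∈ Icc (0 : ℝ) 1) :
    jointCDF P X Y (Vinv₀ (1 - s)) (Vinv₁ (1 - t))
        ≤ jointCDF P (fun ω => 1 - V₀ (X ω)) (fun ω => 1 - V₁ (Y ω)) s t ∧
      jointCDF P (fun ω => 1 - V₀ (X ω)) (fun ω => 1 - V₁ (Y ω)) s t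
        ≤ jointCDF P X Y (Vinv₀ (1 - s)) (Vinv₁ (1 - t)) +
          ((s - jointCDF P X Y s (1 - t)) + (t - jointCDF P X Y (1 - s) t) +
            (1 - (1 - s) - (1 - t) + jointCDF P X Y (1 - s) (1 - t))) := by
  obtain ⟨w₀, hw₀, hE₀⟩ := hV₀.exists_preimage_one_sub_ae_eq hVinv₀ hX hs
  obtain ⟨w₁, hw₁, hE₁⟩ := hV₁.exists_preimage_one_sub_ae_eq hVinv₁ hY ht
  have ha₀ := hV₀.inv_one_sub_le hVinv₀ hs
  have ha₁ := hV₁.inv_one_sub_le hVinv₁ ht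
  set A₀ := X ⁻¹' Iic (Vinv₀ (1 - s))
  set A₁ := Y ⁻¹' Iic (Vinv₁ (1 - t))
  set B₀ := X ⁻¹' Ici w₀
  set B₁ := Y ⁻¹' Ici w₁
  have hflip : jointCDF P (fun ω => 1 - V₀ (X ω)) (fun ω => 1 - V₁ (Y ω)) s t =
      P.real ((A₀ ∪ B₀) ∩ (A₁ ∪ B₁)) := measureReal_congr (hE₀.inter hE₁)
  have hs' : 1 - s ∈ Icc (0 : ℝ) 1 := ⟨by linarith [hs.2], by linarith [hs.1]⟩
  have ht' : 1 - t ∈ Icc (0 : ℝ) 1 := ⟨by linarith [ht.2], by linarith [ht.1]⟩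
  have hAB : P.real (A₀ ∩ B₁) ≤ s - jointCDF P X Y s (1 - t) := by
    rw [← measureReal_preimage_Iic_inter_preimage_Ici hX hY hs]
    exact measureReal_mono (inter_subset_inter (preimage_mono (Iic_subset_Iic.2 ha₀))
      (preimage_mono (Ici_subset_Ici.2 (by linarith))))
  have hBA : P.real (B₀ ∩ A₁) ≤ t - jointCDF P X Y (1 - s) t := by
    rw [← measureReal_preimage_Ici_inter_preimage_Iic hX hY _ ht]
    exact measureReal_mono (inter_subset_inter (preimage_mono (Ici_subset_Ici.2 (by linarith)))
      (preimage_mono (Iic_subset_Iic.2 ha₁)))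
  have hBB : P.real (B₀ ∩ B₁) ≤ 1 - (1 - s) - (1 - t) + jointCDF P X Y (1 - s) (1 - t) := by
    rw [← measureReal_preimage_Ici_inter_preimage_Ici hX hY hs' ht']
    exact measureReal_mono (inter_subset_inter (preimage_mono (Ici_subset_Ici.2 (by linarith)))
      (preimage_mono (Ici_subset_Ici.2 (by linarith))))
  rw [hflip]
  refine ⟨measureReal_mono (inter_subset_inter subset_union_left subset_union_left), ?_⟩
  rw [union_inter_distrib_right, inter_union_distrib_left, inter_union_distrib_left]
  calc P.real ((A₀ ∩ A₁ ∪ A₀ ∩ B₁) ∪ (B₀ ∩ A₁ ∪ B₀ ∩ B₁))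
      ≤ P.real (A₀ ∩ A₁) + P.real (A₀ ∩ B₁) + (P.real (B₀ ∩ A₁) + P.real (B₀ ∩ B₁)) :=
        (measureReal_union_le _ _).trans
          (add_le_add (measureReal_union_le _ _) (measureReal_union_le _ _))
    _ ≤ _ := by rw [jointCDF]; linarith

lemma tendsto_jointCDF_flip_div {α₀ α₁ : ℝ}
    (hα₀ : HasDerivWithinAt (fun v => Vinv₀ (1 - v)) α₀ (Ioi 0) 0)
    (hα₁ : HasDerivWithinAt (fun v => Vinv₁ (1 - v)) α₁ (Ioi 0) 0) {Λ : ℝ → ℝ → ℝ}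
    (hΛ : ∀ x y : ℝ, 0 ≤ x → 0 ≤ y →
      Tendsto (fun p => jointCDF P X Y (p * x) (p * y) / p) (𝓝[>] 0) (𝓝 (Λ x y)))
    {x y : ℝ} (hx : 0 < x) (hy : 0 < y)
    (hLR : Tendsto (fun p => (p * x - jointCDF P X Y (p * x) (1 - p * y)) / p)
      (𝓝[>] 0) (𝓝 0))
    (hUL : Tendsto (fun p => (p * y - jointCDF P X Y (1 - p * x) (p * y)) / p)
      (𝓝[>] 0) (𝓝 0))
    (hUU : Tendsto (fun p =>
        (1 - (1 - p * x) - (1 - p * y) + jointCDF P X Y (1 - p * x) (1 - p * y)) / p)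
      (𝓝[>] 0) (𝓝 0)) :
    Tendsto (fun p =>
        jointCDF P (fun ω => 1 - V₀ (X ω)) (fun ω => 1 - V₁ (Y ω)) (p * x) (p * y) / p)
      (𝓝[>] 0) (𝓝 (Λ (α₀ * x) (α₁ * y))) := by
  have hmain : Tendsto (fun p => jointCDF P X Y (Vinv₀ (1 - p * x)) (Vinv₁ (1 - p * y)) / p)
      (𝓝[>] 0) (𝓝 (Λ (α₀ * x) (α₁ * y))) :=
    tendsto_div_of_abs_sub_le (abs_jointCDF_sub_jointCDF_le hX hY)
      (hΛ _ _ (mul_nonneg (hV₀.nonneg_of_hasDerivWithinAt hVinv₀ hα₀) hx.le)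
        (mul_nonneg (hV₁.nonneg_of_hasDerivWithinAt hVinv₁ hα₁) hy.le))
      (hV₀.tendsto_inv_one_sub_mul_div hVinv₀ hα₀ hx)
      (hV₁.tendsto_inv_one_sub_mul_div hVinv₁ hα₁ hy)
  have hcorners := (hLR.add hUL).add hUU
  rw [add_zero, add_zero] at hcorners
  have hupper := hmain.add hcorners
  rw [add_zero] at hupper
  have hsmall (c : ℝ) (hc : 0 < c) : ∀ᶠ p in 𝓝[>] 0, p * c ∈ Icc (0 : ℝ) 1 :=
    (tendsto_mul_const_nhdsGT_zero hc).eventually_mem (Ioc_mem_nhdsGT zero_lt_one) |>.mono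
      fun _ h => Ioc_subset_Icc_self h
  refine tendsto_of_tendsto_of_tendsto_of_le_of_le' hmain hupper ?_ ?_ <;>
    filter_upwards [hsmall x hx, hsmall y hy, self_mem_nhdsWithin] with p hpx hpy (hp : 0 < p)
  · exact div_le_div_of_nonneg_right
      (jointCDF_flip_bounds hX hY hV₀ hV₁ hVinv₀ hVinv₁ hpx hpy).1 hp.le
  · simp only [← add_div]
    exact div_le_div_of_nonneg_right
      (jointCDF_flip_bounds hX hY hV₀ hV₁ hVinv₀ hVinv₁ hpx hpy).2 hp.le

end Flipped

section Scaling

variable {Λ : ℝ → ℝ → ℝ}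
  (hhom : ∀ c x y : ℝ, 0 < c → 0 ≤ x → 0 ≤ y → Λ (c * x) (c * y) = c * Λ x y)
  {α₀ α₁ : ℝ} (h₀ : 0 < α₀) (h₁ : 0 < α₁)
include hhom h₀ h₁

lemma apply_mul_mul_one_div_eq {b : ℝ} (hb : 0 < b) :
    Λ (α₀ * b) (α₁ * (1 / b)) =
      √(α₀ * α₁) * Λ (√(α₀ / α₁) * b) (1 / (√(α₀ / α₁) * b)) := by
  have hA0 : 0 < √α₀ := Real.sqrt_pos.2 h₀
  have hB0 : 0 < √α₁ := Real.sqrt_pos.2 h₁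
  rw [← hhom _ _ _ (by positivity) (by positivity) (by positivity), Real.sqrt_mul h₀.le,
    Real.sqrt_div h₀.le]
  congr 1
  · field_simp
    exact (Real.sq_sqrt h₀.le).symm
  · field_simp
    exact (Real.sq_sqrt h₁.le).symm

lemma max_apply_mul_mul_one_div {bstar : ℝ} (hbstar : 0 < bstar)
    (hmax : ∀ b : ℝ, 0 < b → Λ b (1 / b) ≤ Λ bstar (1 / bstar)) :
    (∀ b : ℝ, 0 < b →
      Λ (α₀ * b) (α₁ * (1 / b))
        ≤ Λ (α₀ * (√(α₁ / α₀) * bstar)) (α₁ * (1 / (√(α₁ / α₀) * bstar)))) ∧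
    Λ (α₀ * (√(α₁ / α₀) * bstar)) (α₁ * (1 / (√(α₁ / α₀) * bstar)))
      = √(α₀ * α₁) * Λ bstar (1 / bstar) := by
  have hcancel : √(α₀ / α₁) * (√(α₁ / α₀) * bstar) = bstar := by
    rw [← mul_assoc, ← Real.sqrt_mul (by positivity), div_mul_div_comm, mul_comm α₀ α₁,
      div_self (by positivity), Real.sqrt_one, one_mul]
  have heval : Λ (α₀ * (√(α₁ / α₀) * bstar)) (α₁ * (1 / (√(α₁ / α₀) * bstar)))
      = √(α₀ * α₁) * Λ bstar (1 / bstar) := by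
    rw [apply_mul_mul_one_div_eq hhom h₀ h₁ (by positivity), hcancel]
  refine ⟨fun b hb => ?_, heval⟩
  rw [heval, apply_mul_mul_one_div_eq hhom h₀ h₁ hb]
  exact mul_le_mul_of_nonneg_left (hmax _ (by positivity)) (Real.sqrt_nonneg _)

end Scaling

theorem mtcm_of_flipped_v_transformed_copula_general
    {Ω : Type*} [MeasurableSpace Ω] (P : Measure Ω) [IsProbabilityMeasure P]
    -- `(U₁, U₂) ∼ C` with `U(0,1)` margins
    (U : Fin 2 → Ω → ℝ) (hU : ∀ j, Measurable (U j))
    (hUlaw : ∀ j, P.map (U j) = unif01)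
    -- the copula `C`
    (C : ℝ → ℝ → ℝ)
    (hC : ∀ x y : ℝ, C x y = (P {ω | U 0 ω ≤ x ∧ U 1 ω ≤ y}).toReal)
    -- the lower tail copula `Λ(x, y; C)` exists for all `x, y ≥ 0`
    (Λ : ℝ → ℝ → ℝ)
    (hΛ : ∀ x y : ℝ, 0 ≤ x → 0 ≤ y →
      Tendsto (fun p => C (p * x) (p * y) / p) (nhdsWithin 0 (Set.Ioi 0))
        (nhds (Λ x y)))
    -- the MTCM of `C` is attained at a unique `b* ∈ (0, ∞)`
    (bstar : ℝ) (hbstar : 0 < bstar)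
    (hmax : ∀ b : ℝ, 0 < b → Λ b (1 / b) ≤ Λ bstar (1 / bstar))
    -- `C` is tail independent in the upper-left, upper and lower-right tails
    (hUL : ∀ x y : ℝ, 0 < x → 0 < y →
      Tendsto (fun p => (p * y - C (1 - p * x) (p * y)) / p)
        (nhdsWithin 0 (Set.Ioi 0)) (nhds 0))
    (hUU : ∀ x y : ℝ, 0 < x → 0 < y →
      Tendsto (fun p =>
          (1 - (1 - p * x) - (1 - p * y) + C (1 - p * x) (1 - p * y)) / p)
        (nhdsWithin 0 (Set.Ioi 0)) (nhds 0))
    (hLR : ∀ x y : ℝ, 0 < x → 0 < y →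
      Tendsto (fun p => (p * x - C (p * x) (1 - p * y)) / p)
        (nhdsWithin 0 (Set.Ioi 0)) (nhds 0))
    -- the v-transforms `𝒱_j` with fulcra `δ_j`
    (V : Fin 2 → ℝ → ℝ) (δ : Fin 2 → ℝ) (hδ : ∀ j, δ j ∈ Set.Ioo (0 : ℝ) 1)
    (hVmeas : ∀ j, Measurable (V j))
    (hVunif : ∀ j, Measure.map (V j) unif01 = unif01)
    (hVcont : ∀ j, ContinuousOn (V j) (Set.Icc 0 1))
    (hVanti : ∀ j, StrictAntiOn (V j) (Set.Icc 0 (δ j)))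
    (hVmono : ∀ j, StrictMonoOn (V j) (Set.Icc (δ j) 1))
    (hV0 : ∀ j, V j 0 = 1) (hVδ : ∀ j, V j (δ j) = 0) (hV1 : ∀ j, V j 1 = 1)
    -- the inverse `𝒱_{j|1}^{-1}` of the decreasing branch
    (Vinv : Fin 2 → ℝ → ℝ)
    (hVinv : ∀ j, ∀ v ∈ Set.Icc (0 : ℝ) 1,
      Vinv j v ∈ Set.Icc 0 (δ j) ∧ V j (Vinv j v) = v)
    -- `α_j = ((𝒱*_{j|1})^{-1})'(0+)`, where `(𝒱*_{j|1})^{-1}(v) = 𝒱_{j|1}^{-1}(1 - v)`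
    (α : Fin 2 → ℝ)
    (hα : ∀ j, HasDerivWithinAt (fun v => Vinv j (1 - v)) (α j) (Set.Ioi 0) 0)
    -- the flipped v-transformed copula `C_{𝒱*}`, `𝒱*_j = 1 - 𝒱_j`
    (Cs : ℝ → ℝ → ℝ)
    (hCs : ∀ x y : ℝ,
      Cs x y = (P {ω | 1 - V 0 (U 0 ω) ≤ x ∧ 1 - V 1 (U 1 ω) ≤ y}).toReal) :
    -- the tail copula of `C_{𝒱*}`
    (∀ b : ℝ, 0 < b →
      Tendsto (fun p => Cs (p * b) (p * (1 / b)) / p) (nhdsWithin 0 (Set.Ioi 0))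
        (nhds (Λ (α 0 * b) (α 1 * (1 / b))))) ∧
    -- the MTCM of `C_{𝒱*}` when `α₁, α₂ > 0`
    (0 < α 0 → 0 < α 1 →
      (∀ b : ℝ, 0 < b →
        Λ (α 0 * b) (α 1 * (1 / b))
          ≤ Λ (α 0 * (Real.sqrt (α 1 / α 0) * bstar))
              (α 1 * (1 / (Real.sqrt (α 1 / α 0) * bstar)))) ∧
      Λ (α 0 * (Real.sqrt (α 1 / α 0) * bstar))
          (α 1 * (1 / (Real.sqrt (α 1 / α 0) * bstar)))
        = Real.sqrt (α 0 * α 1) * Λ bstar (1 / bstar)) := by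
  have hUmp (j : Fin 2) : MeasurePreserving (U j) P unif01 := ⟨hU j, hUlaw j⟩
  have hVt (j : Fin 2) : IsVTransform (V j) (δ j) :=
    ⟨hδ j, ⟨hVmeas j, hVunif j⟩, hVcont j, hVanti j, hVmono j, hV0 j, hVδ j, hV1 j⟩
  obtain rfl : C = jointCDF P (U 0) (U 1) := funext₂ hC
  obtain rfl : Cs = jointCDF P (fun ω => 1 - V 0 (U 0 ω)) (fun ω => 1 - V 1 (U 1 ω)) :=
    funext₂ hCs
  refine ⟨fun b hb => ?_, fun h₀ h₁ => ?_⟩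
  · have hb' : 0 < 1 / b := one_div_pos.2 hb
    exact tendsto_jointCDF_flip_div (hUmp 0) (hUmp 1) (hVt 0) (hVt 1) (hVinv 0) (hVinv 1)
      (hα 0) (hα 1) hΛ hb hb' (hLR b _ hb hb') (hUL b _ hb hb') (hUU b _ hb hb')
  · exact max_apply_mul_mul_one_div (fun c x y hc hx hy => tailLimit_mul_mul hΛ hc hx hy)
      h₀ h₁ hbstar hmax

/-- maximal tail concordance measure of flipped v-transformed
copulas: `Λ(b, 1/b; C_{𝒱*}) = Λ(α₁ b, α₂/b; C)` for all `b > 0`, and if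
`α₁, α₂ > 0`, the MTCM of `C_{𝒱*}` is attained at `b* √(α₂/α₁)` with value
`√(α₁α₂) Λ(b*, 1/b*; C)`. -/
theorem mtcm_of_flipped_v_transformed_copula
    {Ω : Type*} [MeasurableSpace Ω] (P : Measure Ω) [IsProbabilityMeasure P]
    -- `(U₁, U₂) ∼ C` with `U(0,1)` margins
    (U : Fin 2 → Ω → ℝ) (hU : ∀ j, Measurable (U j))
    (hUlaw : ∀ j, P.map (U j) = unif01)
    -- the copula `C`
    (C : ℝ → ℝ → ℝ)
    (hC : ∀ x y : ℝ, C x y = (P {ω | U 0 ω ≤ x ∧ U 1 ω ≤ y}).toReal)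
    -- the lower tail copula `Λ(x, y; C)` exists for all `x, y ≥ 0`
    (Λ : ℝ → ℝ → ℝ)
    (hΛ : ∀ x y : ℝ, 0 ≤ x → 0 ≤ y →
      Tendsto (fun p => C (p * x) (p * y) / p) (nhdsWithin 0 (Set.Ioi 0))
        (nhds (Λ x y)))
    -- the MTCM of `C` is attained at a unique `b* ∈ (0, ∞)`
    (bstar : ℝ) (hbstar : 0 < bstar)
    (hmax : ∀ b : ℝ, 0 < b → Λ b (1 / b) ≤ Λ bstar (1 / bstar))
    (huniq : ∀ b : ℝ, 0 < b → Λ b (1 / b) = Λ bstar (1 / bstar) → b = bstar)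
    -- `C` is tail independent in the upper-left, upper and lower-right tails
    (hUL : ∀ x y : ℝ, 0 < x → 0 < y →
      Tendsto (fun p => (p * y - C (1 - p * x) (p * y)) / p)
        (nhdsWithin 0 (Set.Ioi 0)) (nhds 0))
    (hUU : ∀ x y : ℝ, 0 < x → 0 < y →
      Tendsto (fun p =>
          (1 - (1 - p * x) - (1 - p * y) + C (1 - p * x) (1 - p * y)) / p)
        (nhdsWithin 0 (Set.Ioi 0)) (nhds 0))
    (hLR : ∀ x y : ℝ, 0 < x → 0 < y →
      Tendsto (fun p => (p * x - C (p * x) (1 - p * y)) / p)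
        (nhdsWithin 0 (Set.Ioi 0)) (nhds 0))
    -- the v-transforms `𝒱_j` with fulcra `δ_j`
    (V : Fin 2 → ℝ → ℝ) (δ : Fin 2 → ℝ) (hδ : ∀ j, δ j ∈ Set.Ioo (0 : ℝ) 1)
    (hVmeas : ∀ j, Measurable (V j))
    (hVunif : ∀ j, Measure.map (V j) unif01 = unif01)
    (hVcont : ∀ j, ContinuousOn (V j) (Set.Icc 0 1))
    (hVanti : ∀ j, StrictAntiOn (V j) (Set.Icc 0 (δ j)))
    (hVmono : ∀ j, StrictMonoOn (V j) (Set.Icc (δ j) 1))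
    (hV0 : ∀ j, V j 0 = 1) (hVδ : ∀ j, V j (δ j) = 0) (hV1 : ∀ j, V j 1 = 1)
    -- the inverse `𝒱_{j|1}^{-1}` of the decreasing branch
    (Vinv : Fin 2 → ℝ → ℝ)
    (hVinv : ∀ j, ∀ v ∈ Set.Icc (0 : ℝ) 1,
      Vinv j v ∈ Set.Icc 0 (δ j) ∧ V j (Vinv j v) = v)
    -- `α_j = ((𝒱*_{j|1})^{-1})'(0+)`, where `(𝒱*_{j|1})^{-1}(v) = 𝒱_{j|1}^{-1}(1 - v)`
    (α : Fin 2 → ℝ) (hα01 : ∀ j, α j ∈ Set.Icc (0 : ℝ) 1)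
    (hα : ∀ j, HasDerivWithinAt (fun v => Vinv j (1 - v)) (α j) (Set.Ioi 0) 0)
    -- the flipped v-transformed copula `C_{𝒱*}`, `𝒱*_j = 1 - 𝒱_j`
    (Cs : ℝ → ℝ → ℝ)
    (hCs : ∀ x y : ℝ,
      Cs x y = (P {ω | 1 - V 0 (U 0 ω) ≤ x ∧ 1 - V 1 (U 1 ω) ≤ y}).toReal) :
    -- the tail copula of `C_{𝒱*}`
    (∀ b : ℝ, 0 < b →
      Tendsto (fun p => Cs (p * b) (p * (1 / b)) / p) (nhdsWithin 0 (Set.Ioi 0))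
        (nhds (Λ (α 0 * b) (α 1 * (1 / b))))) ∧
    -- the MTCM of `C_{𝒱*}` when `α₁, α₂ > 0`
    (0 < α 0 → 0 < α 1 →
      (∀ b : ℝ, 0 < b →
        Λ (α 0 * b) (α 1 * (1 / b))
          ≤ Λ (α 0 * (Real.sqrt (α 1 / α 0) * bstar))
              (α 1 * (1 / (Real.sqrt (α 1 / α 0) * bstar)))) ∧
      Λ (α 0 * (Real.sqrt (α 1 / α 0) * bstar))
          (α 1 * (1 / (Real.sqrt (α 1 / α 0) * bstar)))
        = Real.sqrt (α 0 * α 1) * Λ bstar (1 / bstar)) :=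
  mtcm_of_flipped_v_transformed_copula_general P U hU hUlaw C hC Λ hΛ bstar hbstar hmax hUL hUU hLR
    V δ hδ hVmeas hVunif hVcont hVanti hVmono hV0 hVδ hV1 Vinv hVinv α hα Cs hCs
end

section
/- Let C be a bivariate copula with existing lower and upper tail dependence coefficients λ_l^C = lim_{t→0+} C(t,t)/t and λ_u^C = lim_{t→1−} (1 − 2t + C(t,t))/(1 − t), and let 𝒱 be a v-transform with change point δ, decreasing branch 𝒱_{|1} on [0, δ] with inverse 𝒱_{|1}^{−1}, and one-sided derivative 𝒱′_{|1}(0+) ∈ (−∞, −1] existing. Let C_𝒱 be the joint distribution function of (𝒱(U_1), 𝒱(U_2)) for (U_1, U_2) ∼ C, and assume the limit L = lim_{t→1−} [C(𝒱_{|1}^{−1}(t) + t, 𝒱_{|1}^{−1}(t)) + C(𝒱_{|1}^{−1}(t), 𝒱_{|1}^{−1}(t) + t)]/(1 − t) exists. Then the upper tail dependence coefficient of C_𝒱 is λ_u^{C_𝒱} = (1/(−𝒱′_{|1}(0+))) λ_l^C + (1 − 1/(−𝒱′_{|1}(0+))) λ_u^C + 2/(−𝒱′_{|1}(0+)) − L.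 In particular, if C is tail independent in the upper-left and lower-right tails, so that L = 2/(−𝒱′_{|1}(0+)) in the sense that the corresponding tail copulas vanish, then λ_u^{C_𝒱} = (1/(−𝒱′_{|1}(0+))) λ_l^C + (1 − 1/(−𝒱′_{|1}(0+))) λ_u^C. -/
open MeasureTheory Set Filter

/-- upper tail dependence coefficient of the homogeneous
v-transformed copula `C_𝒱`:
`λ_u^{C_𝒱} = λ_l^C/(-𝒱'_{|1}(0+)) + (1 - 1/(-𝒱'_{|1}(0+))) λ_u^C + 2/(-𝒱'_{|1}(0+)) - L`,
and if `L = 2/(-𝒱'_{|1}(0+))` (tail independence in the upper-left and lower-right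
tails) then `λ_u^{C_𝒱} = λ_l^C/(-𝒱'_{|1}(0+)) + (1 - 1/(-𝒱'_{|1}(0+))) λ_u^C`. -/
theorem upper_tail_dependence_of_v_transformed_copula
    {Ω : Type*} [MeasurableSpace Ω] (P : Measure Ω) [IsProbabilityMeasure P]
    -- `(U₁, U₂) ∼ C` with `U(0,1)` margins
    (U : Fin 2 → Ω → ℝ) (hU : ∀ j, Measurable (U j))
    (hUlaw : ∀ j, P.map (U j) = unif01)
    (C : ℝ → ℝ → ℝ)
    (hC : ∀ x y : ℝ, C x y = (P {ω | U 0 ω ≤ x ∧ U 1 ω ≤ y}).toReal)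
    -- lower and upper tail dependence coefficients of `C`
    (lamL lamU : ℝ)
    (hlamL : Tendsto (fun t => C t t / t) (nhdsWithin 0 (Set.Ioi 0)) (nhds lamL))
    (hlamU : Tendsto (fun t => (1 - 2 * t + C t t) / (1 - t))
      (nhdsWithin 1 (Set.Iio 1)) (nhds lamU))
    -- the v-transform `𝒱` with change point `δ`
    (V : ℝ → ℝ) (δ : ℝ) (hδ : δ ∈ Set.Ioo (0 : ℝ) 1)
    (hVmeas : Measurable V)
    (hVunif : Measure.map V unif01 = unif01)
    (hVcont : ContinuousOn V (Set.Icc 0 1))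
    (hVanti : StrictAntiOn V (Set.Icc 0 δ))
    (hVmono : StrictMonoOn V (Set.Icc δ 1))
    (hV0 : V 0 = 1) (hVδ : V δ = 0) (hV1 : V 1 = 1)
    -- the inverse `𝒱_{|1}^{-1}` of the decreasing branch
    (Vinv : ℝ → ℝ)
    (hVinv : ∀ v ∈ Set.Icc (0 : ℝ) 1, Vinv v ∈ Set.Icc 0 δ ∧ V (Vinv v) = v)
    -- the one-sided derivative `𝒱'_{|1}(0+) ∈ (-∞, -1]`
    (s : ℝ) (hs : s ≤ -1) (hVderiv : HasDerivWithinAt V s (Set.Ioi 0) 0)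
    -- the homogeneous v-transformed copula `C_𝒱`
    (CV : ℝ → ℝ → ℝ)
    (hCV : ∀ x y : ℝ, CV x y = (P {ω | V (U 0 ω) ≤ x ∧ V (U 1 ω) ≤ y}).toReal)
    -- the limit `L`
    (L : ℝ)
    (hL : Tendsto (fun t => (C (Vinv t + t) (Vinv t) + C (Vinv t) (Vinv t + t)) / (1 - t))
      (nhdsWithin 1 (Set.Iio 1)) (nhds L)) :
    -- the upper tail dependence coefficient of `C_𝒱`
    Tendsto (fun t => (1 - 2 * t + CV t t) / (1 - t)) (nhdsWithin 1 (Set.Iio 1))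
      (nhds ((1 / (-s)) * lamL + (1 - 1 / (-s)) * lamU + 2 / (-s) - L)) ∧
    (L = 2 / (-s) →
      Tendsto (fun t => (1 - 2 * t + CV t t) / (1 - t)) (nhdsWithin 1 (Set.Iio 1))
        (nhds ((1 / (-s)) * lamL + (1 - 1 / (-s)) * lamU))) := by
  -- marginal facts
  have hpoint : ∀ j, ∀ (c : ℝ), P {ω | U j ω = c} = 0 := by
    intro j c
    have h1 : P {ω | U j ω = c} = P.map (U j) {c} := by
      rw [Measure.map_apply (hU j) (measurableSet_singleton c)]
      rfl
    rw [h1, hUlaw j]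
    simp only [unif01]
    rw [Measure.restrict_apply (measurableSet_singleton c)]
    exact measure_mono_null Set.inter_subset_left Real.volume_singleton
  have hmem : ∀ j, ∀ᵐ ω ∂P, U j ω ∈ Set.Ioc (0:ℝ) 1 := by
    intro j
    have h1 : P (U j ⁻¹' Set.Ioc 0 1) = 1 := by
      rw [← Measure.map_apply (hU j) measurableSet_Ioc, hUlaw j]
      simp only [unif01]
      rw [Measure.restrict_apply measurableSet_Ioc, Set.inter_self, Real.volume_Ioc]
      norm_num
    have h2 : P (U j ⁻¹' Set.Ioc 0 1)ᶜ = 0 := by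
      rw [measure_compl ((hU j) measurableSet_Ioc) (measure_ne_top _ _), h1]
      simp
    rw [ae_iff]
    exact h2
  have key : ∀ t : ℝ, 0 < t → t < 1 →
      0 < Vinv t ∧ Vinv t + t < 1 ∧
      CV t t = C (Vinv t + t) (Vinv t + t) - C (Vinv t + t) (Vinv t)
        - C (Vinv t) (Vinv t + t) + C (Vinv t) (Vinv t) := by
    intro t ht0 ht1
    obtain ⟨hamem, hVa⟩ := hVinv t ⟨ht0.le, ht1.le⟩
    have ha0 : 0 < Vinv t := by
      rcases lt_or_eq_of_le hamem.1 with h | h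
      · exact h
      · exfalso; rw [← h, hV0] at hVa; linarith
    have haδ : Vinv t ≤ δ := hamem.2
    obtain ⟨w, hwmem, hVw⟩ : ∃ w ∈ Set.Icc δ 1, V w = t := by
      have hsub : Set.Icc (V δ) (V 1) ⊆ V '' Set.Icc δ 1 :=
        intermediate_value_Icc hδ.2.le (hVcont.mono (Set.Icc_subset_Icc hδ.1.le le_rfl))
      have hmem' : t ∈ Set.Icc (V δ) (V 1) := by rw [hVδ, hV1]; exact ⟨ht0.le, ht1.le⟩
      obtain ⟨w, hw, hVw⟩ := hsub hmem'
      exact ⟨w, hw, hVw⟩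
    have hw1 : w < 1 := by
      rcases lt_or_eq_of_le hwmem.2 with h | h
      · exact h
      · exfalso; rw [h, hV1] at hVw; linarith
    have haw : Vinv t ≤ w := le_trans haδ hwmem.1
    -- preimage identity
    have hset : V ⁻¹' Set.Iic t ∩ Set.Ioc 0 1 = Set.Icc (Vinv t) w := by
      ext u
      simp only [Set.mem_inter_iff, Set.mem_preimage, Set.mem_Iic, Set.mem_Ioc, Set.mem_Icc]
      constructor
      · rintro ⟨hVu, hu0, hu1⟩
        constructor
        · by_contra h
          push_neg at h
          have := hVanti ⟨hu0.le, le_trans h.le haδ⟩ ⟨hamem.1, haδ⟩ h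
          rw [hVa] at this; linarith
        · by_contra h
          push_neg at h
          have := hVmono hwmem ⟨le_trans hwmem.1 h.le, hu1⟩ h
          rw [hVw] at this; linarith
      · rintro ⟨hau, huw⟩
        refine ⟨?_, lt_of_lt_of_le ha0 hau, le_trans huw hwmem.2⟩
        rcases le_total u δ with h | h
        · have := hVanti.antitoneOn ⟨hamem.1, haδ⟩ ⟨le_trans hamem.1 hau, h⟩ hau
          rw [hVa] at this; exact this
        · have := hVmono.monotoneOn ⟨h, le_trans huw hwmem.2⟩ hwmem huw
          rw [hVw] at this; exact this
    have hw_eq : w = Vinv t + t := by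
      have h1 := congrArg (fun μ : Measure ℝ => μ (Set.Iic t)) hVunif
      simp only [unif01] at h1
      rw [Measure.map_apply hVmeas measurableSet_Iic,
          Measure.restrict_apply (hVmeas measurableSet_Iic),
          Measure.restrict_apply measurableSet_Iic, hset] at h1
      have h2 : Set.Iic t ∩ Set.Ioc (0:ℝ) 1 = Set.Ioc 0 t := by
        rw [Set.inter_comm, Set.Ioc_inter_Iic, min_eq_right ht1.le]
      rw [h2, Real.volume_Icc, Real.volume_Ioc] at h1
      have := (ENNReal.ofReal_eq_ofReal_iff (by linarith) (by linarith)).mp h1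
      linarith
    refine ⟨ha0, by rw [← hw_eq]; exact hw1, ?_⟩
    -- a.e. identification of the event
    have hne0 : ∀ᵐ ω ∂P, U 0 ω ≠ Vinv t := by
      rw [ae_iff]; simpa [not_not] using hpoint 0 (Vinv t)
    have hne1 : ∀ᵐ ω ∂P, U 1 ω ≠ Vinv t := by
      rw [ae_iff]; simpa [not_not] using hpoint 1 (Vinv t)
    have hiff : ∀ u : ℝ, u ∈ Set.Ioc (0:ℝ) 1 → u ≠ Vinv t →
        (V u ≤ t ↔ (Vinv t < u ∧ u ≤ w)) := by
      intro u hu hune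
      constructor
      · intro h
        have hmem2 : u ∈ Set.Icc (Vinv t) w := by rw [← hset]; exact ⟨h, hu⟩
        exact ⟨lt_of_le_of_ne hmem2.1 (Ne.symm hune), hmem2.2⟩
      · intro h
        have hmem2 : u ∈ V ⁻¹' Set.Iic t ∩ Set.Ioc 0 1 := by
          rw [hset]; exact ⟨h.1.le, h.2⟩
        exact hmem2.1
    have hae : P {ω | V (U 0 ω) ≤ t ∧ V (U 1 ω) ≤ t}
        = P ({ω | U 0 ω ≤ w ∧ U 1 ω ≤ w} \ ({ω | U 0 ω ≤ Vinv t} ∪ {ω | U 1 ω ≤ Vinv t})) := by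
      apply measure_congr
      rw [Filter.eventuallyEq_set]
      filter_upwards [hmem 0, hmem 1, hne0, hne1] with ω hm0 hm1 hn0 hn1
      have g0 := hiff _ hm0 hn0
      have g1 := hiff _ hm1 hn1
      show (V (U 0 ω) ≤ t ∧ V (U 1 ω) ≤ t) ↔
        ((U 0 ω ≤ w ∧ U 1 ω ≤ w) ∧ ¬(U 0 ω ≤ Vinv t ∨ U 1 ω ≤ Vinv t))
      constructor
      · rintro ⟨h0, h1⟩
        obtain ⟨h0a, h0w⟩ := g0.1 h0
        obtain ⟨h1a, h1w⟩ := g1.1 h1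
        exact ⟨⟨h0w, h1w⟩, by push_neg; exact ⟨h0a, h1a⟩⟩
      · rintro ⟨⟨h0w, h1w⟩, h⟩
        push_neg at h
        exact ⟨g0.2 ⟨h.1, h0w⟩, g1.2 ⟨h.2, h1w⟩⟩
    -- measurable sets
    have mA : MeasurableSet {ω | U 0 ω ≤ w ∧ U 1 ω ≤ w} :=
      (measurableSet_le (hU 0) measurable_const).inter (measurableSet_le (hU 1) measurable_const)
    have mB0 : MeasurableSet {ω | U 0 ω ≤ Vinv t} := measurableSet_le (hU 0) measurable_const
    have mB1 : MeasurableSet {ω | U 1 ω ≤ Vinv t} := measurableSet_le (hU 1) measurable_const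
    -- inclusion-exclusion
    have hd : P ({ω | U 0 ω ≤ w ∧ U 1 ω ≤ w} \ ({ω | U 0 ω ≤ Vinv t} ∪ {ω | U 1 ω ≤ Vinv t}))
        = P {ω | U 0 ω ≤ w ∧ U 1 ω ≤ w}
          - P ({ω | U 0 ω ≤ w ∧ U 1 ω ≤ w} ∩ ({ω | U 0 ω ≤ Vinv t} ∪ {ω | U 1 ω ≤ Vinv t})) := by
      rw [← Set.diff_self_inter]
      exact measure_diff Set.inter_subset_left
        ((mA.inter (mB0.union mB1)).nullMeasurableSet) (measure_ne_top _ _)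
    have h2 : P ({ω | U 0 ω ≤ w ∧ U 1 ω ≤ w} ∩ ({ω | U 0 ω ≤ Vinv t} ∪ {ω | U 1 ω ≤ Vinv t}))
          + P ({ω | U 0 ω ≤ w ∧ U 1 ω ≤ w} ∩ ({ω | U 0 ω ≤ Vinv t} ∩ {ω | U 1 ω ≤ Vinv t}))
        = P ({ω | U 0 ω ≤ w ∧ U 1 ω ≤ w} ∩ {ω | U 0 ω ≤ Vinv t})
          + P ({ω | U 0 ω ≤ w ∧ U 1 ω ≤ w} ∩ {ω | U 1 ω ≤ Vinv t}) := by
      rw [Set.inter_union_distrib_left]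
      have e : ({ω | U 0 ω ≤ w ∧ U 1 ω ≤ w} ∩ {ω | U 0 ω ≤ Vinv t})
          ∩ ({ω | U 0 ω ≤ w ∧ U 1 ω ≤ w} ∩ {ω | U 1 ω ≤ Vinv t})
          = {ω | U 0 ω ≤ w ∧ U 1 ω ≤ w} ∩ ({ω | U 0 ω ≤ Vinv t} ∩ {ω | U 1 ω ≤ Vinv t}) := by
        ext ω; simp only [Set.mem_inter_iff, Set.mem_setOf_eq]; tauto
      rw [← e]
      exact measure_union_add_inter _ (mA.inter mB1)
    -- set identifications with C
    have e1 : {ω | U 0 ω ≤ w ∧ U 1 ω ≤ w} ∩ {ω | U 0 ω ≤ Vinv t}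
        = {ω | U 0 ω ≤ Vinv t ∧ U 1 ω ≤ w} := by
      ext ω; simp only [Set.mem_inter_iff, Set.mem_setOf_eq]
      exact ⟨fun h => ⟨h.2, h.1.2⟩, fun h => ⟨⟨le_trans h.1 haw, h.2⟩, h.1⟩⟩
    have e2 : {ω | U 0 ω ≤ w ∧ U 1 ω ≤ w} ∩ {ω | U 1 ω ≤ Vinv t}
        = {ω | U 0 ω ≤ w ∧ U 1 ω ≤ Vinv t} := by
      ext ω; simp only [Set.mem_inter_iff, Set.mem_setOf_eq]
      exact ⟨fun h => ⟨h.1.1, h.2⟩, fun h => ⟨⟨h.1, le_trans h.2 haw⟩, h.2⟩⟩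
    have e3 : {ω | U 0 ω ≤ w ∧ U 1 ω ≤ w} ∩ ({ω | U 0 ω ≤ Vinv t} ∩ {ω | U 1 ω ≤ Vinv t})
        = {ω | U 0 ω ≤ Vinv t ∧ U 1 ω ≤ Vinv t} := by
      ext ω; simp only [Set.mem_inter_iff, Set.mem_setOf_eq]
      exact ⟨fun h => ⟨h.2.1, h.2.2⟩,
        fun h => ⟨⟨le_trans h.1 haw, le_trans h.2 haw⟩, h.1, h.2⟩⟩
    -- put it together in ℝ
    have htoReal : (P ({ω | U 0 ω ≤ w ∧ U 1 ω ≤ w}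
          \ ({ω | U 0 ω ≤ Vinv t} ∪ {ω | U 1 ω ≤ Vinv t}))).toReal
        = C w w - C (Vinv t) w - C w (Vinv t) + C (Vinv t) (Vinv t) := by
      have h2' := congrArg ENNReal.toReal h2
      rw [ENNReal.toReal_add (measure_ne_top _ _) (measure_ne_top _ _),
          ENNReal.toReal_add (measure_ne_top _ _) (measure_ne_top _ _)] at h2'
      rw [hd, ENNReal.toReal_sub_of_le (measure_mono Set.inter_subset_left) (measure_ne_top _ _)]
      rw [e1, e2, e3] at h2'
      rw [hC w w, hC (Vinv t) w, hC w (Vinv t), hC (Vinv t) (Vinv t)]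
      linarith
    rw [hCV t t, hae, htoReal, ← hw_eq]
    ring
  have main : Tendsto (fun t => (1 - 2 * t + CV t t) / (1 - t)) (nhdsWithin 1 (Set.Iio 1))
      (nhds ((1 / (-s)) * lamL + (1 - 1 / (-s)) * lamU + 2 / (-s) - L)) := by
    have hs0 : s < 0 := lt_of_le_of_lt hs (by norm_num)
    have hm0 : (0:ℝ) < -s := by linarith
    set l := nhdsWithin (1:ℝ) (Set.Iio 1) with hldef
    have hIoo : ∀ᶠ t in l, t ∈ Set.Ioo (0:ℝ) 1 := by
      have h1 : ∀ᶠ t in l, t ∈ Set.Iio (1:ℝ) := self_mem_nhdsWithin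
      have h2 : ∀ᶠ t in l, (0:ℝ) < t :=
        ((eventually_gt_nhds (by norm_num : (0:ℝ) < 1)).filter_mono nhdsWithin_le_nhds)
      filter_upwards [h1, h2] with t ht1 ht2
      exact ⟨ht2, ht1⟩
    -- Vinv tends to 0 from the right
    have haT : Tendsto Vinv l (nhdsWithin 0 (Set.Ioi 0)) := by
      rw [tendsto_nhdsWithin_iff]
      constructor
      · rw [tendsto_order]
        constructor
        · intro c hc
          filter_upwards [hIoo] with t ht
          exact lt_of_lt_of_le hc (key t ht.1 ht.2).1.le
        · intro c hc
          have hε0 : (0:ℝ) < min c δ := lt_min hc hδ.1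
          have hεδ : min c δ ≤ δ := min_le_right _ _
          have hVε : V (min c δ) < 1 := by
            have := hVanti ⟨le_rfl, hδ.1.le⟩ ⟨hε0.le, hεδ⟩ hε0
            rw [hV0] at this; exact this
          have h3 : ∀ᶠ t in l, V (min c δ) < t :=
            (eventually_gt_nhds hVε).filter_mono nhdsWithin_le_nhds
          filter_upwards [hIoo, h3] with t ht htV
          obtain ⟨hamem, hVa⟩ := hVinv t ⟨ht.1.le, ht.2.le⟩
          by_contra h
          push_neg at h  -- c ≤ Vinv t
          have hmin : min c δ ≤ Vinv t := le_trans (min_le_left _ _) h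
          rcases eq_or_lt_of_le hmin with he | hlt
          · rw [he] at htV; rw [hVa] at htV; exact lt_irrefl t htV
          · have := hVanti ⟨hε0.le, hεδ⟩ ⟨hamem.1, hamem.2⟩ hlt
            rw [hVa] at this; linarith
      · filter_upwards [hIoo] with t ht
        exact (key t ht.1 ht.2).1
    -- slope limit
    have hslope : Tendsto (fun t => (t - 1) / Vinv t) l (nhds s) := by
      have h1 : Tendsto (slope V 0) (nhdsWithin 0 (Set.Ioi 0)) (nhds s) := by
        rw [hasDerivWithinAt_iff_tendsto_slope] at hVderiv
        simpa using hVderiv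
      have h2 := h1.comp haT
      refine Tendsto.congr' ?_ h2
      filter_upwards [hIoo] with t ht
      show slope V 0 (Vinv t) = (t - 1) / Vinv t
      rw [slope_def_field, (hVinv t ⟨ht.1.le, ht.2.le⟩).2, hV0, sub_zero]
    have hratio : Tendsto (fun t => Vinv t / (1 - t)) l (nhds (-s)⁻¹) := by
      have h1 : Tendsto (fun t => (1 - t) / Vinv t) l (nhds (-s)) := by
        have h2 := hslope.neg
        refine Tendsto.congr ?_ h2
        intro t
        rw [← neg_div, neg_sub]
      have h3 := h1.inv₀ (by positivity)
      refine Tendsto.congr ?_ h3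
      intro t
      exact inv_div (1 - t) (Vinv t) ▸ rfl
    -- b = Vinv + id tends to 1 within Iio 1
    have hbT : Tendsto (fun t => Vinv t + t) l l := by
      rw [hldef, tendsto_nhdsWithin_iff]
      constructor
      · have h1 : Tendsto Vinv l (nhds 0) := haT.mono_right nhdsWithin_le_nhds
        have h2 : Tendsto (fun t : ℝ => t) l (nhds 1) := tendsto_id.mono_right nhdsWithin_le_nhds
        have := h1.add h2
        simpa using this
      · filter_upwards [hIoo] with t ht
        exact (key t ht.1 ht.2).2.1
    have G1 := hlamU.comp hbT
    have G2 := hlamL.comp haT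
    have hcomb : Tendsto (fun t =>
        (1 - 2 * (Vinv t + t) + C (Vinv t + t) (Vinv t + t)) / (1 - (Vinv t + t))
          * (1 - Vinv t / (1 - t))
        + C (Vinv t) (Vinv t) / Vinv t * (Vinv t / (1 - t))
        + 2 * (Vinv t / (1 - t))
        - (C (Vinv t + t) (Vinv t) + C (Vinv t) (Vinv t + t)) / (1 - t)) l
        (nhds (lamU * (1 - (-s)⁻¹) + lamL * (-s)⁻¹ + 2 * (-s)⁻¹ - L)) :=
      (((G1.mul (tendsto_const_nhds.sub hratio)).add (G2.mul hratio)).add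
        (tendsto_const_nhds.mul hratio)).sub hL
    have hval : lamU * (1 - (-s)⁻¹) + lamL * (-s)⁻¹ + 2 * (-s)⁻¹ - L
        = (1 / (-s)) * lamL + (1 - 1 / (-s)) * lamU + 2 / (-s) - L := by ring
    rw [← hval]
    refine Tendsto.congr' ?_ hcomb
    filter_upwards [hIoo] with t ht
    obtain ⟨ha0, hb1, hCVid⟩ := key t ht.1 ht.2
    have h1t : (1:ℝ) - t ≠ 0 := by linarith [ht.2]
    have h1b : (1:ℝ) - (Vinv t + t) ≠ 0 := by linarith
    have hA : Vinv t ≠ 0 := ne_of_gt ha0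
    show (1 - 2 * (Vinv t + t) + C (Vinv t + t) (Vinv t + t)) / (1 - (Vinv t + t))
          * (1 - Vinv t / (1 - t))
        + C (Vinv t) (Vinv t) / Vinv t * (Vinv t / (1 - t))
        + 2 * (Vinv t / (1 - t))
        - (C (Vinv t + t) (Vinv t) + C (Vinv t) (Vinv t + t)) / (1 - t)
        = (1 - 2 * t + CV t t) / (1 - t)
    rw [hCVid]
    field_simp
    ring
  refine ⟨main, fun hLe => ?_⟩
  have hval2 : (1 / (-s)) * lamL + (1 - 1 / (-s)) * lamU + 2 / (-s) - L
      = (1 / (-s)) * lamL + (1 - 1 / (-s)) * lamU := by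
    rw [hLe]; ring
  rw [← hval2]
  exact main
end

section
/- Let 𝒲 be a piecewise surjective and increasing W-transform with change points 0 = δ_0 < δ_1 < ⋯ < δ_K = 1, let G_k(u) = (𝒲_{|k}^{−1}(u) − δ_{k−1})/(δ_k − δ_{k−1}) for u ∈ (0,1) (with G_k(0) = 0, G_k(1) = 1), and let g_k = G_k′ denote its derivative, assumed to exist almost everywhere with one-sided limits g_k(0+) and g_k(1−). Let C_1,…,C_K be bivariate copulas with existing lower and upper tail dependence coefficients λ_{l,k} and λ_{u,k}, and let C_{S,𝒲}(u_1, u_2) = Σ_{k=1}^K (δ_k − δ_{k−1}) C_k(G_k(u_1), G_k(u_2)) be the homogeneous W-transformed ordinal sum. Then the lower and upper tail dependence coefficients of C_{S,𝒲} are λ_l = Σ_{k=1}^K α_k λ_{l,k} and λ_u = Σ_{k=1}^K β_k λ_{u,k}, where α_k = (δ_k − δ_{k−1}) g_k(0+) ≥ 0, β_k = (δ_k − δ_{k−1}) g_k(1−) ≥ 0, and Σ_{k=1}^K α_k = Σ_{k=1}^K β_k = 1. -/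
/-!
Because `𝒲` preserves uniformity, its pieces give `∑ₖ (δₖ - δₖ₋₁) Gₖ(u) = u` on `[0,1]`. With
every `Gₖ` increasing, this makes `Gₖ` Lipschitz with constant `1 / (δₖ - δₖ₋₁)`, hence absolutely
continuous, and the fundamental theorem of calculus turns the one-sided limits `gₖ(0+)`, `gₖ(1-)`
of `Gₖ'` into one-sided derivatives of `Gₖ` at `0` and `1`. Differentiating the identity at the
endpoints gives `∑ αₖ = ∑ βₖ = 1`. The lower tail follows from
`Cₖ(Gₖ t, Gₖ t) / t = (Cₖ(Gₖ t, Gₖ t) / Gₖ t) · (Gₖ t / t)`, and the upper one likewise, since the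
same identity gives `1 - 2t + C_{S,𝒲}(t,t) = ∑ₖ (δₖ - δₖ₋₁) (1 - 2 Gₖ t + Cₖ(Gₖ t, Gₖ t))`.
-/

open MeasureTheory Set Filter

/-- A bivariate copula: grounded, with uniform margins, and 2-increasing. -/
def IsCopula2 (C : ℝ → ℝ → ℝ) : Prop :=
  (∀ u ∈ Set.Icc (0 : ℝ) 1, C u 0 = 0 ∧ C 0 u = 0 ∧ C u 1 = u ∧ C 1 u = u) ∧
  (∀ a b c d : ℝ, a ∈ Set.Icc (0 : ℝ) 1 → b ∈ Set.Icc (0 : ℝ) 1 →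
    c ∈ Set.Icc (0 : ℝ) 1 → d ∈ Set.Icc (0 : ℝ) 1 → a ≤ b → c ≤ d →
    0 ≤ C b d - C a d - C b c + C a c)

/-- `G_k(u) = (𝒲_{|k}^{-1}(u) − δ_{k−1})/(δ_k − δ_{k−1})` on `(0,1)`, with
`G_k(0) = 0` and `G_k(1) = 1`. -/
noncomputable def Gfun (W : ℝ → ℝ) (δ : ℕ → ℝ) (k : ℕ) (u : ℝ) : ℝ :=
  if u = 0 then 0 else if u = 1 then 1
  else (locInvI W (δ (k - 1)) (δ k) u - δ (k - 1)) / (δ k - δ (k - 1))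

open Topology

theorem AbsolutelyContinuousOnInterval.dist_slope_le {f : ℝ → ℝ} {a b L ε : ℝ}
    (hf : AbsolutelyContinuousOnInterval f a b) (hab : a ≠ b)
    (hε : ∀ᵐ x, x ∈ uIoc a b → dist (deriv f x) L ≤ ε) :
    dist (slope f a b) L ≤ ε := by
  have hint : ∫ x in a..b, (deriv f x - L) = f b - f a - (b - a) * L := by
    rw [intervalIntegral.integral_sub hf.intervalIntegrable_deriv intervalIntegrable_const,
      hf.integral_deriv_eq_sub, intervalIntegral.integral_const, smul_eq_mul]
  have hbound : |f b - f a - (b - a) * L| ≤ ε * |b - a| := by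
    rw [← hint, ← Real.norm_eq_abs]
    exact intervalIntegral.norm_integral_le_of_norm_le_const_ae (by simpa [Real.dist_eq] using hε)
  have hba : b - a ≠ 0 := sub_ne_zero.2 hab.symm
  have hslope : (f b - f a) / (b - a) - L = (f b - f a - (b - a) * L) / (b - a) := by
    field_simp
  rw [Real.dist_eq, slope_def_field, hslope, abs_div, div_le_iff₀ (abs_pos.2 hba)]
  exact hbound

theorem hasDerivWithinAt_of_tendsto_deriv_of_absolutelyContinuous {f : ℝ → ℝ} {s : Set ℝ}
    {a L : ℝ} (hs : (insert a s).OrdConnected) (has : a ∉ s)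
    (hf : ∀ᶠ t in 𝓝[s] a, AbsolutelyContinuousOnInterval f a t)
    (hderiv : Tendsto (deriv f) (𝓝[s] a) (𝓝 L)) :
    HasDerivWithinAt f L s a := by
  rw [hasDerivWithinAt_iff_tendsto_slope' has, Metric.tendsto_nhds]
  intro ε hε
  obtain ⟨r, hr, hball⟩ := Metric.mem_nhdsWithin_iff.mp
    (Metric.tendsto_nhds.mp hderiv (ε / 2) (half_pos hε))
  filter_upwards [hf, self_mem_nhdsWithin, mem_nhdsWithin_of_mem_nhds (Metric.ball_mem_nhds a hr)]
    with t hft hts htr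
  refine (hft.dist_slope_le (ne_of_mem_of_not_mem hts has).symm ?_).trans_lt (half_lt_self hε)
  filter_upwards [Measure.ae_ne volume a] with x hxa hx
  have hx' : x ∈ uIcc a t := uIoc_subset_uIcc hx
  refine (hball ⟨?_, ?_⟩).le
  · rw [Metric.mem_ball, Real.dist_eq] at htr ⊢
    exact (abs_sub_left_of_mem_uIcc hx').trans_lt htr
  · exact (hs.uIcc_subset (mem_insert a s) (mem_insert_of_mem a hts) hx').resolve_left hxa

theorem nonneg_of_tendsto_deriv_of_monotoneOn {f : ℝ → ℝ} {S : Set ℝ} {l : Filter ℝ} [l.NeBot]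
    {L : ℝ} (hf : MonotoneOn f S) (hS : interior S ∈ l) (hL : Tendsto (deriv f) l (𝓝 L)) :
    0 ≤ L :=
  ge_of_tendsto hL <| Filter.mem_of_superset hS fun x hx => by
    show 0 ≤ deriv f x
    rw [← derivWithin_of_mem_nhds (mem_interior_iff_mem_nhds.1 hx)]
    exact hf.derivWithin_nonneg

theorem Filter.Tendsto.div_comp {α 𝕜 : Type*} [Field 𝕜] [TopologicalSpace 𝕜] [ContinuousMul 𝕜]
    {φ ψ : α → 𝕜} {G : α → α} {l l' : Filter α} {c g : 𝕜}
    (hφ : Tendsto (fun t => φ t / ψ t) l' (𝓝 c)) (hG : Tendsto G l l')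
    (hψ : Tendsto (fun t => ψ (G t) / ψ t) l (𝓝 g)) (hne : ∀ᶠ t in l, ψ (G t) ≠ 0) :
    Tendsto (fun t => φ (G t) / ψ t) l (𝓝 (g * c)) :=
  (hψ.mul (hφ.comp hG)).congr' <| hne.mono fun t ht => by
    simp only [Function.comp_apply]
    rw [mul_comm, div_mul_div_cancel₀ ht]

section Distortions

variable {ι : Type*} {s : Finset ι} {w : ι → ℝ} {G : ι → ℝ → ℝ}

theorem lipschitzOnWith_of_sum_mul_eq_id {S : Set ℝ} (hw : ∀ i ∈ s, 0 < w i)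
    (hG : ∀ i ∈ s, MonotoneOn (G i) S) (hsum : ∀ u ∈ S, ∑ i ∈ s, w i * G i u = u)
    {i : ι} (hi : i ∈ s) :
    LipschitzOnWith (w i)⁻¹.toNNReal (G i) S := by
  have hincr : ∀ u ∈ S, ∀ v ∈ S, u ≤ v → w i * (G i v - G i u) ≤ v - u := by
    intro u hu v hv huv
    calc w i * (G i v - G i u) ≤ ∑ j ∈ s, w j * (G j v - G j u) :=
          Finset.single_le_sum (f := fun j => w j * (G j v - G j u))
            (fun j hj => mul_nonneg (hw j hj).le (sub_nonneg.2 (hG j hj hu hv huv))) hi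
      _ = v - u := by simp only [mul_sub, Finset.sum_sub_distrib, hsum u hu, hsum v hv]
  refine LipschitzOnWith.of_dist_le' fun u hu v hv => ?_
  wlog huv : v ≤ u generalizing u v
  · rw [dist_comm, dist_comm u]
    exact this v hv u hu (le_of_not_ge huv)
  rw [Real.dist_eq, Real.dist_eq, abs_of_nonneg (sub_nonneg.2 (hG i hi hv hu huv)),
    abs_of_nonneg (sub_nonneg.2 huv), le_inv_mul_iff₀ (hw i hi)]
  exact hincr v hv u hu huv

theorem hasDerivWithinAt_Ioi_zero_of_sum_mul_eq_id (hw : ∀ i ∈ s, 0 < w i)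
    (hG : ∀ i ∈ s, MonotoneOn (G i) (Icc 0 1))
    (hsum : ∀ u ∈ Icc (0 : ℝ) 1, ∑ i ∈ s, w i * G i u = u) {i : ι} (hi : i ∈ s) {g : ℝ}
    (hg : Tendsto (deriv (G i)) (𝓝[>] 0) (𝓝 g)) :
    HasDerivWithinAt (G i) g (Ioi 0) 0 := by
  refine hasDerivWithinAt_of_tendsto_deriv_of_absolutelyContinuous
    (by rw [Ioi_insert]; exact ordConnected_Ici) self_notMem_Ioi ?_ hg
  filter_upwards [Icc_mem_nhdsGT zero_lt_one] with t ht
  exact ((lipschitzOnWith_of_sum_mul_eq_id hw hG hsum hi).mono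
    (uIcc_subset_Icc (left_mem_Icc.2 zero_le_one) ht)).absolutelyContinuousOnInterval

theorem hasDerivWithinAt_Iio_one_of_sum_mul_eq_id (hw : ∀ i ∈ s, 0 < w i)
    (hG : ∀ i ∈ s, MonotoneOn (G i) (Icc 0 1))
    (hsum : ∀ u ∈ Icc (0 : ℝ) 1, ∑ i ∈ s, w i * G i u = u) {i : ι} (hi : i ∈ s) {g : ℝ}
    (hg : Tendsto (deriv (G i)) (𝓝[<] 1) (𝓝 g)) :
    HasDerivWithinAt (G i) g (Iio 1) 1 := by
  refine hasDerivWithinAt_of_tendsto_deriv_of_absolutelyContinuous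
    (by rw [Iio_insert]; exact ordConnected_Iic) self_notMem_Iio ?_ hg
  filter_upwards [Icc_mem_nhdsLT zero_lt_one] with t ht
  exact ((lipschitzOnWith_of_sum_mul_eq_id hw hG hsum hi).mono
    (uIcc_subset_Icc (right_mem_Icc.2 zero_le_one) ht)).absolutelyContinuousOnInterval

theorem sum_mul_eq_one_of_hasDerivWithinAt {S t : Set ℝ} {a : ℝ} {g : ι → ℝ}
    (hsum : ∀ u ∈ S, ∑ i ∈ s, w i * G i u = u) (ha : a ∈ S) (hS : S ∈ 𝓝[t] a)
    (ht : UniqueDiffWithinAt ℝ t a) (hg : ∀ i ∈ s, HasDerivWithinAt (G i) (g i) t a) :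
    ∑ i ∈ s, w i * g i = 1 :=
  ht.eq_deriv _ (HasDerivWithinAt.fun_sum fun i hi => (hg i hi).const_mul (w i))
    ((hasDerivWithinAt_id a t).congr_of_eventuallyEq (eventually_of_mem hS hsum) (hsum a ha))

theorem tendsto_sum_mul_diag_div_nhdsGT_zero {C : ι → ℝ → ℝ → ℝ} {g c : ι → ℝ}
    (hG : ∀ i ∈ s, StrictMonoOn (G i) (Icc 0 1)) (hG0 : ∀ i ∈ s, G i 0 = 0)
    (hg : ∀ i ∈ s, HasDerivWithinAt (G i) (g i) (Ioi 0) 0)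
    (hC : ∀ i ∈ s, Tendsto (fun t => C i t t / t) (𝓝[>] 0) (𝓝 (c i))) :
    Tendsto (fun t => (∑ i ∈ s, w i * C i (G i t) (G i t)) / t) (𝓝[>] 0)
      (𝓝 (∑ i ∈ s, w i * g i * c i)) := by
  have hpos : ∀ i ∈ s, ∀ᶠ t in 𝓝[>] (0 : ℝ), 0 < G i t := fun i hi => by
    filter_upwards [Ioo_mem_nhdsGT zero_lt_one] with t ht
    simpa only [hG0 i hi] using hG i hi (left_mem_Icc.2 zero_le_one) (Ioo_subset_Icc_self ht) ht.1
  have hcomp : ∀ i ∈ s, Tendsto (fun t => C i (G i t) (G i t) / t) (𝓝[>] 0) (𝓝 (g i * c i)) :=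
    fun i hi => (hC i hi).div_comp (ψ := id)
      (tendsto_nhdsWithin_iff.2 ⟨by simpa only [ContinuousWithinAt, hG0 i hi] using
        (hg i hi).continuousWithinAt, hpos i hi⟩)
      (((hasDerivWithinAt_iff_tendsto_slope' self_notMem_Ioi).1 (hg i hi)).congr fun t => by
        rw [slope_def_field, hG0 i hi, sub_zero, sub_zero]; rfl)
      ((hpos i hi).mono fun t ht => ht.ne')
  simp only [Finset.sum_div, mul_div_assoc, mul_assoc]
  exact tendsto_finsetSum s fun i hi => (hcomp i hi).const_mul (w i)

theorem tendsto_sum_mul_survival_div_nhdsLT_one {C : ι → ℝ → ℝ → ℝ} {g c : ι → ℝ}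
    (hG : ∀ i ∈ s, StrictMonoOn (G i) (Icc 0 1)) (hG1 : ∀ i ∈ s, G i 1 = 1)
    (hsum : ∀ u ∈ Icc (0 : ℝ) 1, ∑ i ∈ s, w i * G i u = u)
    (hg : ∀ i ∈ s, HasDerivWithinAt (G i) (g i) (Iio 1) 1)
    (hC : ∀ i ∈ s, Tendsto (fun t => (1 - 2 * t + C i t t) / (1 - t)) (𝓝[<] 1) (𝓝 (c i))) :
    Tendsto (fun t => (1 - 2 * t + ∑ i ∈ s, w i * C i (G i t) (G i t)) / (1 - t)) (𝓝[<] 1)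
      (𝓝 (∑ i ∈ s, w i * g i * c i)) := by
  have hlt : ∀ i ∈ s, ∀ᶠ t in 𝓝[<] (1 : ℝ), G i t < 1 := fun i hi => by
    filter_upwards [Ioo_mem_nhdsLT zero_lt_one] with t ht
    simpa only [hG1 i hi] using hG i hi (Ioo_subset_Icc_self ht) (right_mem_Icc.2 zero_le_one) ht.2
  have hcomp : ∀ i ∈ s, Tendsto (fun t => (1 - 2 * G i t + C i (G i t) (G i t)) / (1 - t))
      (𝓝[<] 1) (𝓝 (g i * c i)) :=
    fun i hi => (hC i hi).div_comp (φ := fun u => 1 - 2 * u + C i u u) (ψ := fun u => 1 - u)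
      (tendsto_nhdsWithin_iff.2 ⟨by simpa only [ContinuousWithinAt, hG1 i hi] using
        (hg i hi).continuousWithinAt, hlt i hi⟩)
      (((hasDerivWithinAt_iff_tendsto_slope' self_notMem_Iio).1 (hg i hi)).congr fun t => by
        rw [slope_def_field, hG1 i hi, ← neg_div_neg_eq, neg_sub, neg_sub])
      ((hlt i hi).mono fun t ht => (sub_pos.2 ht).ne')
  have hw1 : ∑ i ∈ s, w i = 1 := by
    rw [← hsum 1 (right_mem_Icc.2 zero_le_one)]
    exact Finset.sum_congr rfl fun i hi => by rw [hG1 i hi, mul_one]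
  simp only [mul_assoc]
  refine (tendsto_finsetSum s fun i hi => (hcomp i hi).const_mul (w i)).congr' ?_
  filter_upwards [Ioo_mem_nhdsLT zero_lt_one] with t ht
  have hsurv : ∑ i ∈ s, w i * (1 - 2 * G i t + C i (G i t) (G i t))
      = 1 - 2 * t + ∑ i ∈ s, w i * C i (G i t) (G i t) := by
    simp only [mul_add, mul_sub, mul_one, Finset.sum_add_distrib, Finset.sum_sub_distrib,
      mul_left_comm _ (2 : ℝ), ← Finset.mul_sum, hw1, hsum t (Ioo_subset_Icc_self ht)]
  rw [← hsurv, Finset.sum_div]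
  simp only [mul_div_assoc]

end Distortions

section LocalInverse

variable {W : ℝ → ℝ} {a b : ℝ}

theorem locInvI_spec (hm : StrictMonoOn W (Ioc a b)) (himg : W '' Ioc a b = Ioc 0 1)
    {v : ℝ} (hv : v ∈ Ioc (0 : ℝ) 1) :
    locInvI W a b v ∈ Ioc a b ∧ W (locInvI W a b v) = v := by
  obtain ⟨x, hx, rfl⟩ : v ∈ W '' Ioc a b := himg ▸ hv
  have hset : {u | u ∈ Ioc a b ∧ W x ≤ W u} ∪ {b} = Icc x b := by
    ext y
    simp only [mem_union, mem_ofPred_eq, mem_singleton_iff, mem_Icc]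
    constructor
    · rintro (⟨hy, hxy⟩ | rfl)
      · exact ⟨(hm.le_iff_le hx hy).1 hxy, hy.2⟩
      · exact ⟨hx.2, le_rfl⟩
    · rintro ⟨hxy, hyb⟩
      have hy : y ∈ Ioc a b := ⟨hx.1.trans_le hxy, hyb⟩
      exact Or.inl ⟨hy, (hm.le_iff_le hx hy).2 hxy⟩
  rw [locInvI, hset, csInf_Icc hx.2]
  exact ⟨hx, rfl⟩

theorem locInvI_lt_right (hm : StrictMonoOn W (Ioc a b)) (himg : W '' Ioc a b = Ioc 0 1)
    {v : ℝ} (hv : v ∈ Ioo (0 : ℝ) 1) :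
    locInvI W a b v < b := by
  obtain ⟨x, hx, hWx⟩ : 1 ∈ W '' Ioc a b := himg ▸ right_mem_Ioc.2 zero_lt_one
  obtain ⟨hmem, hW⟩ := locInvI_spec hm himg (Ioo_subset_Ioc_self hv)
  exact ((hm.lt_iff_lt hmem hx).1 (by rw [hW, hWx]; exact hv.2)).trans_le hx.2

theorem strictMonoOn_locInvI (hm : StrictMonoOn W (Ioc a b)) (himg : W '' Ioc a b = Ioc 0 1) :
    StrictMonoOn (locInvI W a b) (Ioc 0 1) := fun u hu v hv huv => by
  obtain ⟨hmu, hWu⟩ := locInvI_spec hm himg hu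
  obtain ⟨hmv, hWv⟩ := locInvI_spec hm himg hv
  exact (hm.lt_iff_lt hmu hmv).1 (by rwa [hWu, hWv])

theorem preimage_Iic_inter_Ioc_eq_Ioc_locInvI (hm : StrictMonoOn W (Ioc a b))
    (himg : W '' Ioc a b = Ioc 0 1) {v : ℝ} (hv : v ∈ Ioc (0 : ℝ) 1) :
    W ⁻¹' Iic v ∩ Ioc a b = Ioc a (locInvI W a b v) := by
  obtain ⟨hmv, hWv⟩ := locInvI_spec hm himg hv
  ext y
  simp only [mem_inter_iff, mem_preimage, mem_Iic, mem_Ioc]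
  constructor
  · rintro ⟨hWy, hy⟩
    exact ⟨hy.1, (hm.le_iff_le hy hmv).1 (hWy.trans_eq hWv.symm)⟩
  · rintro ⟨hay, hyv⟩
    have hy : y ∈ Ioc a b := ⟨hay, hyv.trans hmv.2⟩
    exact ⟨((hm.le_iff_le hy hmv).2 hyv).trans_eq hWv, hy⟩

end LocalInverse

section Gfun

variable {W : ℝ → ℝ} {δ : ℕ → ℝ} {k : ℕ}

@[simp]
theorem Gfun_zero : Gfun W δ k 0 = 0 := by simp [Gfun]

@[simp]
theorem Gfun_one : Gfun W δ k 1 = 1 := by simp [Gfun]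

theorem Gfun_of_mem_Ioo {u : ℝ} (hu : u ∈ Ioo (0 : ℝ) 1) :
    Gfun W δ k u = (locInvI W (δ (k - 1)) (δ k) u - δ (k - 1)) / (δ k - δ (k - 1)) := by
  rw [Gfun, if_neg hu.1.ne', if_neg hu.2.ne]

theorem Gfun_mem_Ioo (hk : δ (k - 1) < δ k) (hm : StrictMonoOn W (Ioc (δ (k - 1)) (δ k)))
    (himg : W '' Ioc (δ (k - 1)) (δ k) = Ioc 0 1) {u : ℝ} (hu : u ∈ Ioo (0 : ℝ) 1) :
    Gfun W δ k u ∈ Ioo (0 : ℝ) 1 := by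
  have hlo := (locInvI_spec hm himg (Ioo_subset_Ioc_self hu)).1.1
  have hhi := locInvI_lt_right hm himg hu
  rw [Gfun_of_mem_Ioo hu]
  exact ⟨div_pos (sub_pos.2 hlo) (sub_pos.2 hk), (div_lt_one (sub_pos.2 hk)).2 (by linarith)⟩

theorem strictMonoOn_Gfun (hk : δ (k - 1) < δ k) (hm : StrictMonoOn W (Ioc (δ (k - 1)) (δ k)))
    (himg : W '' Ioc (δ (k - 1)) (δ k) = Ioc 0 1) :
    StrictMonoOn (Gfun W δ k) (Icc 0 1) := by
  intro u hu v hv huv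
  rcases hu.1.eq_or_lt with rfl | hu0 <;> rcases hv.2.eq_or_lt with rfl | hv1
  · simp
  · simpa using (Gfun_mem_Ioo hk hm himg ⟨huv, hv1⟩).1
  · simpa using (Gfun_mem_Ioo hk hm himg ⟨hu0, huv⟩).2
  · have hu' : u ∈ Ioo (0 : ℝ) 1 := ⟨hu0, huv.trans hv1⟩
    have hv' : v ∈ Ioo (0 : ℝ) 1 := ⟨hu0.trans huv, hv1⟩
    rw [Gfun_of_mem_Ioo hu', Gfun_of_mem_Ioo hv']
    exact div_lt_div_of_pos_right (sub_lt_sub_right (strictMonoOn_locInvI hm himg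
      (Ioo_subset_Ioc_self hu') (Ioo_subset_Ioc_self hv') huv) _) (sub_pos.2 hk)

end Gfun

theorem StrictMonoOn.apply_sub_one_lt {β : Type*} [Preorder β] {δ : ℕ → β} {K k : ℕ}
    (hδ : StrictMonoOn δ (Iic K)) (hk : k ∈ Finset.Icc 1 K) :
    δ (k - 1) < δ k := by
  rw [Finset.mem_Icc] at hk
  exact hδ (mem_Iic.2 (by omega)) (mem_Iic.2 hk.2) (by omega)

theorem measure_inter_Ioc_eq_sum (μ : Measure ℝ) {A : Set ℝ} (hA : MeasurableSet A) {δ : ℕ → ℝ}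
    {n : ℕ} (hδ : MonotoneOn δ (Iic n)) :
    μ (A ∩ Ioc (δ 0) (δ n)) = ∑ k ∈ Finset.Icc 1 n, μ (A ∩ Ioc (δ (k - 1)) (δ k)) := by
  induction n with
  | zero => simp
  | succ n ih =>
    have h0n : δ 0 ≤ δ n := hδ (Nat.zero_le _) n.le_succ (Nat.zero_le n)
    have hn : δ n ≤ δ (n + 1) := hδ n.le_succ (mem_Iic.2 le_rfl) n.le_succ
    rw [← Ioc_union_Ioc_eq_Ioc h0n hn, inter_union_distrib_left,
      measure_union ((Ioc_disjoint_Ioc_of_le le_rfl).mono inter_subset_right inter_subset_right)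
        (hA.inter measurableSet_Ioc),
      ih (hδ.mono (Iic_subset_Iic.2 n.le_succ)), Finset.sum_Icc_succ_top (by omega),
      Nat.add_sub_cancel]

theorem sum_Icc_sub_pred (f : ℕ → ℝ) (n : ℕ) :
    ∑ k ∈ Finset.Icc 1 n, (f k - f (k - 1)) = f n - f 0 := by
  induction n with
  | zero => simp
  | succ n ih => rw [Finset.sum_Icc_succ_top (by omega), ih, Nat.add_sub_cancel]; ring

theorem sum_mul_Gfun_eq {W : ℝ → ℝ} (hWmeas : Measurable W)
    (hWunif : Measure.map W unif01 = unif01) {K : ℕ} {δ : ℕ → ℝ} (hδ0 : δ 0 = 0) (hδK : δ K = 1)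
    (hδ : StrictMonoOn δ (Iic K))
    (hmono : ∀ k ∈ Finset.Icc 1 K, StrictMonoOn W (Ioc (δ (k - 1)) (δ k)))
    (hsurj : ∀ k ∈ Finset.Icc 1 K, W '' Ioc (δ (k - 1)) (δ k) = Ioc (0 : ℝ) 1)
    {u : ℝ} (hu : u ∈ Icc (0 : ℝ) 1) :
    ∑ k ∈ Finset.Icc 1 K, (δ k - δ (k - 1)) * Gfun W δ k u = u := by
  have hw : ∀ k ∈ Finset.Icc 1 K, δ (k - 1) < δ k := fun k hk => hδ.apply_sub_one_lt hk
  rcases hu.1.eq_or_lt with rfl | hu0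
  · simp
  rcases hu.2.eq_or_lt with rfl | hu1
  · simp only [Gfun_one, mul_one]
    rw [sum_Icc_sub_pred, hδ0, hδK, sub_zero]
  have hu' : u ∈ Ioo (0 : ℝ) 1 := ⟨hu0, hu1⟩
  have hpiece : ∀ k ∈ Finset.Icc 1 K, volume (W ⁻¹' Iic u ∩ Ioc (δ (k - 1)) (δ k))
      = ENNReal.ofReal ((δ k - δ (k - 1)) * Gfun W δ k u) := fun k hk => by
    rw [preimage_Iic_inter_Ioc_eq_Ioc_locInvI (hmono k hk) (hsurj k hk) (Ioo_subset_Ioc_self hu'),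
      Real.volume_Ioc, Gfun_of_mem_Ioo hu', mul_div_cancel₀ _ (sub_pos.2 (hw k hk)).ne']
  have hmeasure : ENNReal.ofReal u
      = ∑ k ∈ Finset.Icc 1 K, ENNReal.ofReal ((δ k - δ (k - 1)) * Gfun W δ k u) := by
    calc ENNReal.ofReal u = unif01 (Iic u) := by
          rw [unif01, Measure.restrict_apply measurableSet_Iic, inter_comm, Ioc_inter_Iic,
            min_eq_right hu.2, Real.volume_Ioc, sub_zero]
      _ = volume (W ⁻¹' Iic u ∩ Ioc (δ 0) (δ K)) := by
          rw [← hWunif, Measure.map_apply hWmeas measurableSet_Iic, unif01,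
            Measure.restrict_apply (hWmeas measurableSet_Iic), hδ0, hδK]
      _ = _ := by
          rw [measure_inter_Ioc_eq_sum volume (hWmeas measurableSet_Iic) hδ.monotoneOn]
          exact Finset.sum_congr rfl hpiece
  have hnonneg : ∀ k ∈ Finset.Icc 1 K, 0 ≤ (δ k - δ (k - 1)) * Gfun W δ k u := fun k hk =>
    mul_nonneg (sub_pos.2 (hw k hk)).le
      (Gfun_mem_Ioo (hw k hk) (hmono k hk) (hsurj k hk) hu').1.le
  rwa [← ENNReal.ofReal_sum_of_nonneg hnonneg,
    ENNReal.ofReal_eq_ofReal_iff hu0.le (Finset.sum_nonneg hnonneg), eq_comm] at hmeasure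

theorem tail_dependence_of_w_transformed_ordinal_sum_general
    (W : ℝ → ℝ) (hWmeas : Measurable W)
    -- `𝒲` is uniformity-preserving
    (hWunif : Measure.map W unif01 = unif01)
    -- change points `0 = δ_0 < δ_1 < ⋯ < δ_K = 1`
    (K : ℕ) (δ : ℕ → ℝ)
    (hδ0 : δ 0 = 0) (hδK : δ K = 1)
    (hδ : ∀ k : ℕ, k < K → δ k < δ (k + 1))
    -- `𝒲` is piecewise surjective, continuous and strictly increasing
    (hmono : ∀ k ∈ Finset.Icc 1 K, StrictMonoOn W (Set.Ioc (δ (k - 1)) (δ k)))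
    (hsurj : ∀ k ∈ Finset.Icc 1 K,
      W '' Set.Ioc (δ (k - 1)) (δ k) = Set.Ioc (0 : ℝ) 1)
    -- the derivatives `g_k = G_k'` exist almost everywhere, with one-sided limits
    (g0 g1 : ℕ → ℝ)
    (hg0 : ∀ k ∈ Finset.Icc 1 K,
      Tendsto (deriv (Gfun W δ k)) (nhdsWithin 0 (Set.Ioi 0)) (nhds (g0 k)))
    (hg1 : ∀ k ∈ Finset.Icc 1 K,
      Tendsto (deriv (Gfun W δ k)) (nhdsWithin 1 (Set.Iio 1)) (nhds (g1 k)))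
    -- the component copulas `C_k` with tail dependence coefficients
    (C : ℕ → ℝ → ℝ → ℝ)
    (lamL lamU : ℕ → ℝ)
    (hlamL : ∀ k ∈ Finset.Icc 1 K,
      Tendsto (fun t => C k t t / t) (nhdsWithin 0 (Set.Ioi 0)) (nhds (lamL k)))
    (hlamU : ∀ k ∈ Finset.Icc 1 K,
      Tendsto (fun t => (1 - 2 * t + C k t t) / (1 - t))
        (nhdsWithin 1 (Set.Iio 1)) (nhds (lamU k)))
    -- the homogeneous W-transformed ordinal sum
    (CSW : ℝ → ℝ → ℝ)
    (hCSW : ∀ u₁ u₂ : ℝ, CSW u₁ u₂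
      = ∑ k ∈ Finset.Icc 1 K,
          (δ k - δ (k - 1)) * C k (Gfun W δ k u₁) (Gfun W δ k u₂)) :
    -- the weights are nonnegative and sum to one
    (∀ k ∈ Finset.Icc 1 K, 0 ≤ (δ k - δ (k - 1)) * g0 k) ∧
    (∀ k ∈ Finset.Icc 1 K, 0 ≤ (δ k - δ (k - 1)) * g1 k) ∧
    (∑ k ∈ Finset.Icc 1 K, (δ k - δ (k - 1)) * g0 k) = 1 ∧
    (∑ k ∈ Finset.Icc 1 K, (δ k - δ (k - 1)) * g1 k) = 1 ∧
    -- the lower tail dependence coefficient `λ_l = Σ_k α_k λ_{l,k}`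
    Tendsto (fun t => CSW t t / t) (nhdsWithin 0 (Set.Ioi 0))
      (nhds (∑ k ∈ Finset.Icc 1 K, ((δ k - δ (k - 1)) * g0 k) * lamL k)) ∧
    -- the upper tail dependence coefficient `λ_u = Σ_k β_k λ_{u,k}`
    Tendsto (fun t => (1 - 2 * t + CSW t t) / (1 - t)) (nhdsWithin 1 (Set.Iio 1))
      (nhds (∑ k ∈ Finset.Icc 1 K, ((δ k - δ (k - 1)) * g1 k) * lamU k)) := by
  have hδ' : StrictMonoOn δ (Iic K) := strictMonoOn_Iic_of_lt_succ hδ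
  have hw : ∀ k ∈ Finset.Icc 1 K, 0 < δ k - δ (k - 1) := fun k hk =>
    sub_pos.2 (hδ'.apply_sub_one_lt hk)
  have hG : ∀ k ∈ Finset.Icc 1 K, StrictMonoOn (Gfun W δ k) (Icc 0 1) := fun k hk =>
    strictMonoOn_Gfun (hδ'.apply_sub_one_lt hk) (hmono k hk) (hsurj k hk)
  have hsum : ∀ u ∈ Icc (0 : ℝ) 1, ∑ k ∈ Finset.Icc 1 K, (δ k - δ (k - 1)) * Gfun W δ k u = u :=
    fun u hu => sum_mul_Gfun_eq hWmeas hWunif hδ0 hδK hδ' hmono hsurj hu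
  have hd0 : ∀ k ∈ Finset.Icc 1 K, HasDerivWithinAt (Gfun W δ k) (g0 k) (Ioi 0) 0 := fun k hk =>
    hasDerivWithinAt_Ioi_zero_of_sum_mul_eq_id hw (fun j hj => (hG j hj).monotoneOn) hsum hk
      (hg0 k hk)
  have hd1 : ∀ k ∈ Finset.Icc 1 K, HasDerivWithinAt (Gfun W δ k) (g1 k) (Iio 1) 1 := fun k hk =>
    hasDerivWithinAt_Iio_one_of_sum_mul_eq_id hw (fun j hj => (hG j hj).monotoneOn) hsum hk
      (hg1 k hk)
  refine ⟨fun k hk => mul_nonneg (hw k hk).le ?_, fun k hk => mul_nonneg (hw k hk).le ?_,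
    sum_mul_eq_one_of_hasDerivWithinAt hsum (left_mem_Icc.2 zero_le_one)
      (Icc_mem_nhdsGT zero_lt_one) (uniqueDiffWithinAt_Ioi 0) hd0,
    sum_mul_eq_one_of_hasDerivWithinAt hsum (right_mem_Icc.2 zero_le_one)
      (Icc_mem_nhdsLT zero_lt_one) (uniqueDiffWithinAt_Iio 1) hd1, ?_, ?_⟩
  · exact nonneg_of_tendsto_deriv_of_monotoneOn (hG k hk).monotoneOn
      (by rw [interior_Icc]; exact Ioo_mem_nhdsGT zero_lt_one) (hg0 k hk)
  · exact nonneg_of_tendsto_deriv_of_monotoneOn (hG k hk).monotoneOn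
      (by rw [interior_Icc]; exact Ioo_mem_nhdsLT zero_lt_one) (hg1 k hk)
  · simpa only [hCSW] using
      tendsto_sum_mul_diag_div_nhdsGT_zero hG (fun _ _ => Gfun_zero) hd0 hlamL
  · simpa only [hCSW] using
      tendsto_sum_mul_survival_div_nhdsLT_one hG (fun _ _ => Gfun_one) hsum hd1 hlamU

/-- tail dependence coefficients of the homogeneous W-transformed
ordinal sum `C_{S,𝒲}(u₁,u₂) = Σ_k (δ_k − δ_{k−1}) C_k(G_k(u₁), G_k(u₂))`:
`λ_l = Σ_k α_k λ_{l,k}` and `λ_u = Σ_k β_k λ_{u,k}` with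
`α_k = (δ_k − δ_{k−1}) g_k(0+) ≥ 0`, `β_k = (δ_k − δ_{k−1}) g_k(1−) ≥ 0` and
`Σ_k α_k = Σ_k β_k = 1`. -/
theorem tail_dependence_of_w_transformed_ordinal_sum
    (W : ℝ → ℝ) (hWmeas : Measurable W)
    (hWmaps : Set.MapsTo W (Set.Icc 0 1) (Set.Icc 0 1))
    -- `𝒲` is uniformity-preserving
    (hWunif : Measure.map W unif01 = unif01)
    -- change points `0 = δ_0 < δ_1 < ⋯ < δ_K = 1`
    (K : ℕ) (hK : 1 ≤ K) (δ : ℕ → ℝ)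
    (hδ0 : δ 0 = 0) (hδK : δ K = 1)
    (hδ : ∀ k : ℕ, k < K → δ k < δ (k + 1))
    -- `𝒲` is piecewise surjective, continuous and strictly increasing
    (hmono : ∀ k ∈ Finset.Icc 1 K, StrictMonoOn W (Set.Ioc (δ (k - 1)) (δ k)))
    (hcont : ∀ k ∈ Finset.Icc 1 K, ContinuousOn W (Set.Ioc (δ (k - 1)) (δ k)))
    (hsurj : ∀ k ∈ Finset.Icc 1 K,
      W '' Set.Ioc (δ (k - 1)) (δ k) = Set.Ioc (0 : ℝ) 1)
    -- the derivatives `g_k = G_k'` exist almost everywhere, with one-sided limits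
    (hGdiff : ∀ k ∈ Finset.Icc 1 K,
      ∀ᵐ u ∂(volume.restrict (Set.Icc (0 : ℝ) 1)),
        DifferentiableAt ℝ (Gfun W δ k) u)
    (g0 g1 : ℕ → ℝ)
    (hg0 : ∀ k ∈ Finset.Icc 1 K,
      Tendsto (deriv (Gfun W δ k)) (nhdsWithin 0 (Set.Ioi 0)) (nhds (g0 k)))
    (hg1 : ∀ k ∈ Finset.Icc 1 K,
      Tendsto (deriv (Gfun W δ k)) (nhdsWithin 1 (Set.Iio 1)) (nhds (g1 k)))
    -- the component copulas `C_k` with tail dependence coefficients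
    (C : ℕ → ℝ → ℝ → ℝ) (hCk : ∀ k ∈ Finset.Icc 1 K, IsCopula2 (C k))
    (lamL lamU : ℕ → ℝ)
    (hlamL : ∀ k ∈ Finset.Icc 1 K,
      Tendsto (fun t => C k t t / t) (nhdsWithin 0 (Set.Ioi 0)) (nhds (lamL k)))
    (hlamU : ∀ k ∈ Finset.Icc 1 K,
      Tendsto (fun t => (1 - 2 * t + C k t t) / (1 - t))
        (nhdsWithin 1 (Set.Iio 1)) (nhds (lamU k)))
    -- the homogeneous W-transformed ordinal sum
    (CSW : ℝ → ℝ → ℝ)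
    (hCSW : ∀ u₁ u₂ : ℝ, CSW u₁ u₂
      = ∑ k ∈ Finset.Icc 1 K,
          (δ k - δ (k - 1)) * C k (Gfun W δ k u₁) (Gfun W δ k u₂)) :
    -- the weights are nonnegative and sum to one
    (∀ k ∈ Finset.Icc 1 K, 0 ≤ (δ k - δ (k - 1)) * g0 k) ∧
    (∀ k ∈ Finset.Icc 1 K, 0 ≤ (δ k - δ (k - 1)) * g1 k) ∧
    (∑ k ∈ Finset.Icc 1 K, (δ k - δ (k - 1)) * g0 k) = 1 ∧
    (∑ k ∈ Finset.Icc 1 K, (δ k - δ (k - 1)) * g1 k) = 1 ∧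
    -- the lower tail dependence coefficient `λ_l = Σ_k α_k λ_{l,k}`
    Tendsto (fun t => CSW t t / t) (nhdsWithin 0 (Set.Ioi 0))
      (nhds (∑ k ∈ Finset.Icc 1 K, ((δ k - δ (k - 1)) * g0 k) * lamL k)) ∧
    -- the upper tail dependence coefficient `λ_u = Σ_k β_k λ_{u,k}`
    Tendsto (fun t => (1 - 2 * t + CSW t t) / (1 - t)) (nhdsWithin 1 (Set.Iio 1))
      (nhds (∑ k ∈ Finset.Icc 1 K, ((δ k - δ (k - 1)) * g1 k) * lamU k)) :=
  tail_dependence_of_w_transformed_ordinal_sum_general W hWmeas hWunif K δ hδ0 hδK hδ hmono hsurj g0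
    g1 hg0 hg1 C lamL lamU hlamL hlamU CSW hCSW
end
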